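/- arXiv:math/0010272 — 7 statements merged into one kernel-verified Lean document; each statement's English description precedes it below -/
import Mathlib

section
/- Let p ≥ 5 be a prime and let s, t : (ℤ/pℤ) ∖ {0} → ℂ satisfy s_{−a} = −s_a for all a ≠ 0 and the quadratic relations s_a s_b + s_b s_c + s_c s_a + t_a + t_b + t_c = 0 for all a, b, c ∈ (ℤ/pℤ) ∖ {0} with a + b + c = 0. Then t_{−a} = t_a for all a ∈ (ℤ/pℤ) ∖ {0}. -/
/-- If s is odd and the quadratic relations
s_a s_b + s_b s_c + s_c s_a + t_a + t_b + t_c = 0 hold for all nonzero triples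
summing to zero in ℤ/pℤ, then t is even. -/
theorem statement2 (p : ℕ) (hp : p.Prime) (hp5 : 5 ≤ p)
    (s t : ZMod p → ℂ)
    (hodd : ∀ a : ZMod p, a ≠ 0 → s (-a) = - s a)
    (hquad : ∀ a b c : ZMod p, a ≠ 0 → b ≠ 0 → c ≠ 0 → a + b + c = 0 →
      s a * s b + s b * s c + s c * s a + t a + t b + t c = 0) :
    ∀ a : ZMod p, a ≠ 0 → t (-a) = t a := by
  haveI : NeZero p := ⟨by omega⟩
  haveI : Fact p.Prime := ⟨hp⟩
  set u : ZMod p → ℂ := fun x => t x - t (-x) with hu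
  -- additivity of u
  have hadd : ∀ a b : ZMod p, a ≠ 0 → b ≠ 0 → a + b ≠ 0 →
      u (a + b) = u a + u b := by
    intro a b ha hb hab
    have h1 := hquad a b (-(a+b)) ha hb (neg_ne_zero.mpr hab) (by ring)
    have h2 := hquad (-a) (-b) (a+b) (neg_ne_zero.mpr ha) (neg_ne_zero.mpr hb) hab (by ring)
    rw [hodd a ha, hodd b hb] at h2
    rw [hodd (a+b) hab] at h1
    simp only [hu]
    linear_combination h2 - h1
  -- u of natural number casts
  have hnat : ∀ k : ℕ, k < p → u (k : ZMod p) = (k : ℂ) * u 1 := by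
    intro k
    induction k with
    | zero => intro _; simp [hu]
    | succ n ih =>
      intro hlt
      rcases Nat.eq_zero_or_pos n with h0 | hpos
      · subst h0; simp
      · have hn : (n : ZMod p) ≠ 0 := by
          rw [Ne, ZMod.natCast_eq_zero_iff]
          exact fun h => absurd (Nat.le_of_dvd hpos h) (by omega)
        have hn1 : ((n : ZMod p) + 1) ≠ 0 := by
          have : ((n + 1 : ℕ) : ZMod p) ≠ 0 := by
            rw [Ne, ZMod.natCast_eq_zero_iff]
            exact fun h => absurd (Nat.le_of_dvd (by omega) h) (by omega)
          simpa using this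
        have := hadd (n : ZMod p) 1 hn one_ne_zero hn1
        push_cast
        rw [this, ih (by omega)]
        ring
  -- u is odd
  have huodd : ∀ a : ZMod p, u (-a) = - u a := by
    intro a; simp [hu]
  -- u 1 = 0
  have h1 : u 1 = 0 := by
    have hpm : ((p - 1 : ℕ) : ZMod p) = -1 := by
      have : ((p : ℕ) : ZMod p) = 0 := ZMod.natCast_self p
      push_cast [Nat.cast_sub (by omega : 1 ≤ p)]
      rw [this]; ring
    have h2 := hnat (p - 1) (by omega)
    rw [hpm, huodd 1] at h2
    have hpc : ((p : ℂ)) * u 1 = 0 := by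
      have : ((p - 1 : ℕ) : ℂ) = (p : ℂ) - 1 := by
        push_cast [Nat.cast_sub (by omega : 1 ≤ p)]; ring
      rw [this] at h2
      linear_combination -h2
    have hp0 : (p : ℂ) ≠ 0 := by
      exact_mod_cast Nat.cast_ne_zero.mpr (by omega)
    exact (mul_eq_zero.mp hpc).resolve_left hp0
  -- conclude
  intro a ha
  have hval : ((a.val : ℕ) : ZMod p) = a := by rw [ZMod.natCast_val, ZMod.cast_id]
  have := hnat a.val (ZMod.val_lt a)
  rw [hval, h1, mul_zero] at this
  have : t a - t (-a) = 0 := this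
  exact (sub_eq_zero.mp this).symm
end

section
/- Let p ≥ 5 be a prime, let ξ ∈ ℂ be a primitive p-th root of unity, and let s, t : (ℤ/pℤ) ∖ {0} → ℂ satisfy s_{−a} = −s_a, t_{−a} = t_a, and s_a s_b + s_b s_c + s_c s_a + t_a + t_b + t_c = 0 for all nonzero a, b, c with a + b + c = 0 in ℤ/pℤ. Define S_a = Σ_{k≠0} ξ^{ka} s_k and T_a = Σ_{k≠0} ξ^{ka} (2 t_k − s_k²). Then S_{−a} = −S_a, T_{−a} = T_a, and S_a S_b + S_b S_c + S_c S_a + T_a + T_b + T_c = 0 for all nonzero a, b, c with a + b + c = 0. -/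
open Finset
set_option linter.unusedSectionVars false
set_option maxHeartbeats 1000000

variable {p : ℕ} [NeZero p] {ξ : ℂ}

lemma epow (hξ : IsPrimitiveRoot ξ p) (n : ℕ) : ξ ^ (n % p) = ξ ^ n := by
  conv_rhs => rw [← Nat.mod_add_div n p, pow_add, pow_mul, hξ.pow_eq_one, one_pow, mul_one]

lemma e_mul (hξ : IsPrimitiveRoot ξ p) (x y : ZMod p) :
    ξ ^ (x + y).val = ξ ^ x.val * ξ ^ y.val := by
  rw [ZMod.val_add, epow hξ, pow_add]

lemma e_mul_eq (hξ : IsPrimitiveRoot ξ p) {x y z : ZMod p} (h : x + y = z) :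
    ξ ^ x.val * ξ ^ y.val = ξ ^ z.val := by
  rw [← e_mul hξ, h]

lemma e_eq (hξ : IsPrimitiveRoot ξ p) {x y u v : ZMod p} (h : x + y = u + v) :
    ξ ^ x.val * ξ ^ y.val = ξ ^ u.val * ξ ^ v.val := by
  rw [← e_mul hξ, ← e_mul hξ, h]

lemma sum_univ_e (hξ : IsPrimitiveRoot ξ p) (hp1 : 1 < p) : ∑ x : ZMod p, ξ ^ x.val = 0 := by
  rw [← hξ.geom_sum_eq_zero hp1]
  exact Finset.sum_nbij' (fun x => x.val) (fun i => (i : ZMod p))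
    (fun x _ => Finset.mem_range.2 (ZMod.val_lt x))
    (fun i hi => Finset.mem_univ _)
    (fun x _ => ZMod.natCast_rightInverse x)
    (fun i hi => ZMod.val_cast_of_lt (Finset.mem_range.1 hi))
    (fun x _ => rfl)

def Kf (p : ℕ) [NeZero p] : Finset (ZMod p) := univ.filter (fun k => k ≠ 0)

def Gset (p : ℕ) [NeZero p] : Finset (ZMod p × ZMod p) :=
  ((Kf p) ×ˢ (Kf p)).filter (fun q => q.1 ≠ q.2)

def G2set (p : ℕ) [NeZero p] : Finset (ZMod p × ZMod p) :=
  ((Kf p) ×ˢ (Kf p)).filter (fun q => q.1 + q.2 ≠ 0)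

lemma mem_Kf {x : ZMod p} : x ∈ Kf p ↔ x ≠ 0 := by simp [Kf]

lemma mem_Gset {q : ZMod p × ZMod p} : q ∈ Gset p ↔ q.1 ≠ 0 ∧ q.2 ≠ 0 ∧ q.1 ≠ q.2 := by
  simp [Gset, Kf, Finset.mem_product, and_assoc]

lemma mem_G2set {q : ZMod p × ZMod p} : q ∈ G2set p ↔ q.1 ≠ 0 ∧ q.2 ≠ 0 ∧ q.1 + q.2 ≠ 0 := by
  simp [G2set, Kf, Finset.mem_product, and_assoc]

lemma sum_mul_e (hp : p.Prime) (hξ : IsPrimitiveRoot ξ p) {b : ZMod p} (hb : b ≠ 0) :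
    ∑ x : ZMod p, ξ ^ (x * b).val = 0 := by
  haveI : Fact p.Prime := ⟨hp⟩
  rw [Fintype.sum_equiv (Equiv.mulRight₀ b hb) (fun x => ξ ^ (x * b).val)
    (fun y => ξ ^ y.val) (fun x => rfl)]
  exact sum_univ_e hξ hp.one_lt

lemma sum_K (hp : p.Prime) (hξ : IsPrimitiveRoot ξ p) {b : ZMod p} (hb : b ≠ 0) :
    ∑ x ∈ Kf p, ξ ^ (x * b).val = -1 := by
  have h := sum_mul_e hp hξ hb
  rw [Kf, Finset.filter_ne']
  have h2 := Finset.sum_erase_add univ (fun x : ZMod p => ξ ^ (x * b).val) (Finset.mem_univ 0)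
  rw [h] at h2
  simp only [zero_mul, ZMod.val_zero, pow_zero] at h2
  linear_combination h2

lemma sum_K_erase (hp : p.Prime) (hξ : IsPrimitiveRoot ξ p) {b : ZMod p} (hb : b ≠ 0)
    {j : ZMod p} (hj : j ≠ 0) :
    ∑ x ∈ (Kf p).erase j, ξ ^ (x * b).val = -1 - ξ ^ (j * b).val := by
  have hjK : j ∈ Kf p := mem_Kf.2 hj
  have h2 := Finset.sum_erase_add _ (fun x : ZMod p => ξ ^ (x * b).val) hjK
  rw [sum_K hp hξ hb] at h2
  linear_combination h2

lemma sum_K_neg (f : ZMod p → ℂ) :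
    ∑ x ∈ Kf p, f (-x) = ∑ x ∈ Kf p, f x := by
  exact Finset.sum_nbij' (fun x => -x) (fun x => -x)
    (fun x hx => mem_Kf.2 (neg_ne_zero.2 (mem_Kf.1 hx)))
    (fun x hx => mem_Kf.2 (neg_ne_zero.2 (mem_Kf.1 hx)))
    (fun x _ => neg_neg x) (fun x _ => neg_neg x)
    (fun x _ => rfl)

lemma sum_G_iter (f : ZMod p × ZMod p → ℂ) :
    ∑ q ∈ Gset p, f q = ∑ j ∈ Kf p, ∑ k ∈ (Kf p).erase j, f (j, k) := by
  rw [Gset, Finset.sum_filter, Finset.sum_product]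
  refine Finset.sum_congr rfl fun j hj => ?_
  rw [← Finset.filter_ne (Kf p) j, Finset.sum_filter]

lemma sum_G_iter' (f : ZMod p × ZMod p → ℂ) :
    ∑ q ∈ Gset p, f q = ∑ k ∈ Kf p, ∑ j ∈ (Kf p).erase k, f (j, k) := by
  rw [Gset, Finset.sum_filter, Finset.sum_product_right]
  refine Finset.sum_congr rfl fun k hk => ?_
  rw [← Finset.filter_ne' (Kf p) k, Finset.sum_filter]

lemma sum_G2_iter (f : ZMod p × ZMod p → ℂ) :
    ∑ q ∈ G2set p, f q = ∑ m ∈ Kf p, ∑ u ∈ (Kf p).erase (-m), f (u, m) := by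
  rw [G2set, Finset.sum_filter, Finset.sum_product_right]
  refine Finset.sum_congr rfl fun m hm => ?_
  rw [← Finset.filter_ne' (Kf p) (-m), Finset.sum_filter]
  refine Finset.sum_congr rfl fun u hu => ?_
  exact if_congr (not_congr ⟨fun h => by linear_combination h, fun h => by rw [h]; ring⟩) rfl rfl

lemma sum_diag (f : ZMod p × ZMod p → ℂ) :
    ∑ q ∈ ((Kf p) ×ˢ (Kf p)).filter (fun q => ¬ q.1 ≠ q.2), f q = ∑ j ∈ Kf p, f (j, j) := by
  refine Finset.sum_nbij' (fun q => q.1) (fun x => (x, x)) ?_ ?_ ?_ ?_ ?_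
  · rintro ⟨x, y⟩ hq
    simp only [Finset.mem_filter, Finset.mem_product] at hq
    exact hq.1.1
  · intro x hx
    simp only [Finset.mem_filter, Finset.mem_product, not_not]
    exact ⟨⟨hx, hx⟩, trivial⟩
  · rintro ⟨x, y⟩ hq
    simp only [Finset.mem_filter, not_not] at hq
    exact Prod.ext rfl hq.2
  · intro x hx; rfl
  · rintro ⟨x, y⟩ hq
    simp only [Finset.mem_filter, not_not] at hq
    obtain ⟨-, rfl⟩ := hq
    rfl

lemma sum_G_reindex2 (f : ZMod p × ZMod p → ℂ) :
    ∑ q ∈ Gset p, f q = ∑ q ∈ Gset p, f (q.2 - q.1, -q.1) := by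
  refine Finset.sum_nbij' (fun q => (-q.2, q.1 - q.2)) (fun q => (q.2 - q.1, -q.1)) ?_ ?_ ?_ ?_ ?_
  · rintro ⟨x, y⟩ hq
    rw [mem_Gset] at hq ⊢
    obtain ⟨h1, h2, h3⟩ := hq
    exact ⟨neg_ne_zero.2 h2, sub_ne_zero.2 h3, fun h => h1 (by linear_combination -h)⟩
  · rintro ⟨x, y⟩ hq
    rw [mem_Gset] at hq ⊢
    obtain ⟨h1, h2, h3⟩ := hq
    exact ⟨sub_ne_zero.2 (Ne.symm h3), neg_ne_zero.2 h1, fun h => h2 (by linear_combination h)⟩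
  · rintro ⟨x, y⟩ hq; exact Prod.ext (by show x - y - -y = x; ring) (by show - -y = y; ring)
  · rintro ⟨x, y⟩ hq; exact Prod.ext (by show - -x = x; ring) (by show y - x - -x = y; ring)
  · rintro ⟨x, y⟩ hq
    exact congrArg f (Prod.ext (show x = (x - y) - -y by ring) (show y = - -y by ring))

lemma sum_G_reindex3 (f : ZMod p × ZMod p → ℂ) :
    ∑ q ∈ Gset p, f q = ∑ q ∈ Gset p, f (-q.2, q.1 - q.2) := by
  refine Finset.sum_nbij' (fun q => (q.2 - q.1, -q.1)) (fun q => (-q.2, q.1 - q.2)) ?_ ?_ ?_ ?_ ?_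
  · rintro ⟨x, y⟩ hq
    rw [mem_Gset] at hq ⊢
    obtain ⟨h1, h2, h3⟩ := hq
    exact ⟨sub_ne_zero.2 (Ne.symm h3), neg_ne_zero.2 h1, fun h => h2 (by linear_combination h)⟩
  · rintro ⟨x, y⟩ hq
    rw [mem_Gset] at hq ⊢
    obtain ⟨h1, h2, h3⟩ := hq
    exact ⟨neg_ne_zero.2 h2, sub_ne_zero.2 h3, fun h => h1 (by linear_combination -h)⟩
  · rintro ⟨x, y⟩ hq; exact Prod.ext (by show -(-x) = x; ring) (by show y - x - -x = y; ring)
  · rintro ⟨x, y⟩ hq; exact Prod.ext (by show x - y - -y = x; ring) (by show - -y = y; ring)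
  · rintro ⟨x, y⟩ hq
    exact congrArg f (Prod.ext (show x = -(-x) by ring) (show y = y - x - -x by ring))

lemma sum_G_to_G2 (f : ZMod p × ZMod p → ℂ) :
    ∑ q ∈ Gset p, f q = ∑ r ∈ G2set p, f (r.1, r.1 + r.2) := by
  refine Finset.sum_nbij' (fun q => (q.1, q.2 - q.1)) (fun r => (r.1, r.1 + r.2)) ?_ ?_ ?_ ?_ ?_
  · rintro ⟨x, y⟩ hq
    rw [mem_Gset] at hq; rw [mem_G2set]
    obtain ⟨h1, h2, h3⟩ := hq
    exact ⟨h1, sub_ne_zero.2 (Ne.symm h3), by simpa using h2⟩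
  · rintro ⟨x, y⟩ hr
    rw [mem_G2set] at hr; rw [mem_Gset]
    obtain ⟨h1, h2, h3⟩ := hr
    exact ⟨h1, h3, fun h => h2 (by linear_combination -h)⟩
  · rintro ⟨x, y⟩ hq; exact Prod.ext rfl (by show x + (y - x) = y; ring)
  · rintro ⟨x, y⟩ hr; exact Prod.ext rfl (by show x + y - x = y; ring)
  · rintro ⟨x, y⟩ hq
    exact congrArg f (Prod.ext rfl (show y = x + (y - x) by ring))

/-- If (s, t) satisfies the symmetries and quadratic relations, and
S_a = Σ_{k≠0} ξ^{ka} s_k, T_a = Σ_{k≠0} ξ^{ka}(2t_k − s_k²) for ξ a primitive p-th root of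
unity, then (S, T) also satisfies the symmetries and quadratic relations (this is, up to
scaling, the Fricke involution). -/
theorem statement6 (p : ℕ) (hp : p.Prime) (hp5 : 5 ≤ p) [NeZero p]
    (ξ : ℂ) (hξ : IsPrimitiveRoot ξ p)
    (s t : ZMod p → ℂ)
    (hodd : ∀ a : ZMod p, a ≠ 0 → s (-a) = - s a)
    (heven : ∀ a : ZMod p, a ≠ 0 → t (-a) = t a)
    (hquad : ∀ a b c : ZMod p, a ≠ 0 → b ≠ 0 → c ≠ 0 → a + b + c = 0 →
      s a * s b + s b * s c + s c * s a + t a + t b + t c = 0)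
    (S T : ZMod p → ℂ)
    (hS : ∀ a : ZMod p, S a = ∑ k ∈ univ.filter (fun k : ZMod p => k ≠ 0),
      ξ ^ (k * a).val * s k)
    (hT : ∀ a : ZMod p, T a = ∑ k ∈ univ.filter (fun k : ZMod p => k ≠ 0),
      ξ ^ (k * a).val * (2 * t k - s k ^ 2)) :
    (∀ a : ZMod p, a ≠ 0 → S (-a) = - S a) ∧
    (∀ a : ZMod p, a ≠ 0 → T (-a) = T a) ∧
    (∀ a b c : ZMod p, a ≠ 0 → b ≠ 0 → c ≠ 0 → a + b + c = 0 →
      S a * S b + S b * S c + S c * S a + T a + T b + T c = 0) := by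
  have hS' : ∀ x : ZMod p, S x = ∑ k ∈ Kf p, ξ ^ (k * x).val * s k := hS
  have hT' : ∀ x : ZMod p, T x = ∑ k ∈ Kf p, ξ ^ (k * x).val * (2 * t k - s k ^ 2) := hT
  refine ⟨?_, ?_, ?_⟩
  · intro a ha
    calc S (-a) = ∑ k ∈ Kf p, ξ ^ (k * -a).val * s k := hS' _
      _ = ∑ k ∈ Kf p, (fun x => ξ ^ (x * a).val * s (-x)) (-k) := by
          refine Finset.sum_congr rfl fun k hk => ?_
          show ξ ^ (k * -a).val * s k = ξ ^ (-k * a).val * s (- -k)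
          rw [neg_neg, show k * -a = -k * a by ring]
      _ = ∑ k ∈ Kf p, ξ ^ (k * a).val * s (-k) := sum_K_neg (fun x => ξ ^ (x * a).val * s (-x))
      _ = ∑ k ∈ Kf p, -(ξ ^ (k * a).val * s k) := by
          refine Finset.sum_congr rfl fun k hk => ?_
          rw [hodd k (mem_Kf.1 hk)]; ring
      _ = - S a := by rw [hS' a, Finset.sum_neg_distrib]
  · intro a ha
    calc T (-a) = ∑ k ∈ Kf p, ξ ^ (k * -a).val * (2 * t k - s k ^ 2) := hT' _
      _ = ∑ k ∈ Kf p, (fun x => ξ ^ (x * a).val * (2 * t (-x) - s (-x) ^ 2)) (-k) := by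
          refine Finset.sum_congr rfl fun k hk => ?_
          show _ = ξ ^ (-k * a).val * (2 * t (- -k) - s (- -k) ^ 2)
          rw [neg_neg, show k * -a = -k * a by ring]
      _ = ∑ k ∈ Kf p, ξ ^ (k * a).val * (2 * t (-k) - s (-k) ^ 2) := sum_K_neg (fun x => ξ ^ (x * a).val * (2 * t (-x) - s (-x) ^ 2))
      _ = ∑ k ∈ Kf p, ξ ^ (k * a).val * (2 * t k - s k ^ 2) := by
          refine Finset.sum_congr rfl fun k hk => ?_
          rw [heven k (mem_Kf.1 hk), hodd k (mem_Kf.1 hk)]; ring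
      _ = T a := (hT' a).symm
  · intro a b c ha hb hc habc
    have hab : a + b ≠ 0 := fun h => hc (by linear_combination habc - h)
    have hnegt : ∀ m : ZMod p, (∑ j ∈ Kf p, t j * ξ ^ (-j * m).val)
        = ∑ j ∈ Kf p, t j * ξ ^ (j * m).val := by
      intro m
      calc (∑ j ∈ Kf p, t j * ξ ^ (-j * m).val)
          = ∑ j ∈ Kf p, t (- -j) * ξ ^ (-j * m).val :=
            Finset.sum_congr rfl fun j _ => by rw [neg_neg]
        _ = ∑ j ∈ Kf p, t (-j) * ξ ^ (j * m).val := sum_K_neg (fun x => t (-x) * ξ ^ (x * m).val)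
        _ = ∑ j ∈ Kf p, t j * ξ ^ (j * m).val :=
            Finset.sum_congr rfl fun j hj => by rw [heven j (mem_Kf.1 hj)]
    have h1 : S a * S b = (∑ q ∈ Kf p ×ˢ Kf p, ξ ^ (q.1 * a).val * ξ ^ (q.2 * b).val * (s q.1 * s q.2)) := by
      rw [hS' a, hS' b, Finset.sum_mul_sum, Finset.sum_product]
      refine Finset.sum_congr rfl fun j _ => Finset.sum_congr rfl fun k _ =>
        show ξ ^ (j * a).val * s j * (ξ ^ (k * b).val * s k)
          = ξ ^ (j * a).val * ξ ^ (k * b).val * (s j * s k) from by ring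
    have h2 : S b * S c = (∑ q ∈ Kf p ×ˢ Kf p, ξ ^ (q.1 * b).val * ξ ^ (q.2 * c).val * (s q.1 * s q.2)) := by
      rw [hS' b, hS' c, Finset.sum_mul_sum, Finset.sum_product]
      refine Finset.sum_congr rfl fun j _ => Finset.sum_congr rfl fun k _ =>
        show ξ ^ (j * b).val * s j * (ξ ^ (k * c).val * s k)
          = ξ ^ (j * b).val * ξ ^ (k * c).val * (s j * s k) from by ring
    have h3 : S c * S a = (∑ q ∈ Kf p ×ˢ Kf p, ξ ^ (q.1 * c).val * ξ ^ (q.2 * a).val * (s q.1 * s q.2)) := by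
      rw [hS' c, hS' a, Finset.sum_mul_sum, Finset.sum_product]
      refine Finset.sum_congr rfl fun j _ => Finset.sum_congr rfl fun k _ =>
        show ξ ^ (j * c).val * s j * (ξ ^ (k * a).val * s k)
          = ξ ^ (j * c).val * ξ ^ (k * a).val * (s j * s k) from by ring
    have h4 : (∑ q ∈ Kf p ×ˢ Kf p, ξ ^ (q.1 * a).val * ξ ^ (q.2 * b).val * (s q.1 * s q.2)) = (∑ q ∈ Gset p, ξ ^ (q.1 * a).val * ξ ^ (q.2 * b).val * (s q.1 * s q.2)) + (∑ q ∈ (Kf p ×ˢ Kf p).filter (fun q => ¬ q.1 ≠ q.2), ξ ^ (q.1 * a).val * ξ ^ (q.2 * b).val * (s q.1 * s q.2)) :=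
      (Finset.sum_filter_add_sum_filter_not (Kf p ×ˢ Kf p) (fun q => q.1 ≠ q.2) _).symm
    have h5 : (∑ q ∈ Kf p ×ˢ Kf p, ξ ^ (q.1 * b).val * ξ ^ (q.2 * c).val * (s q.1 * s q.2)) = (∑ q ∈ Gset p, ξ ^ (q.1 * b).val * ξ ^ (q.2 * c).val * (s q.1 * s q.2)) + (∑ q ∈ (Kf p ×ˢ Kf p).filter (fun q => ¬ q.1 ≠ q.2), ξ ^ (q.1 * b).val * ξ ^ (q.2 * c).val * (s q.1 * s q.2)) :=
      (Finset.sum_filter_add_sum_filter_not (Kf p ×ˢ Kf p) (fun q => q.1 ≠ q.2) _).symm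
    have h6 : (∑ q ∈ Kf p ×ˢ Kf p, ξ ^ (q.1 * c).val * ξ ^ (q.2 * a).val * (s q.1 * s q.2)) = (∑ q ∈ Gset p, ξ ^ (q.1 * c).val * ξ ^ (q.2 * a).val * (s q.1 * s q.2)) + (∑ q ∈ (Kf p ×ˢ Kf p).filter (fun q => ¬ q.1 ≠ q.2), ξ ^ (q.1 * c).val * ξ ^ (q.2 * a).val * (s q.1 * s q.2)) :=
      (Finset.sum_filter_add_sum_filter_not (Kf p ×ˢ Kf p) (fun q => q.1 ≠ q.2) _).symm
    have h7 : (∑ q ∈ Gset p, ξ ^ (q.1 * b).val * ξ ^ (q.2 * c).val * (s q.1 * s q.2)) = (∑ q ∈ Gset p, ξ ^ (q.1 * a).val * ξ ^ (q.2 * b).val * (s (q.2 - q.1) * s (-q.1))) := by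
      calc (∑ q ∈ Gset p, ξ ^ (q.1 * b).val * ξ ^ (q.2 * c).val * (s q.1 * s q.2))
          = ∑ q ∈ Gset p, ξ ^ ((q.2 - q.1) * b).val * ξ ^ (-q.1 * c).val
              * (s (q.2 - q.1) * s (-q.1)) := sum_G_reindex2 _
        _ = (∑ q ∈ Gset p, ξ ^ (q.1 * a).val * ξ ^ (q.2 * b).val * (s (q.2 - q.1) * s (-q.1))) := Finset.sum_congr rfl fun q hq => by
            rw [e_eq hξ (show (q.2 - q.1) * b + -q.1 * c = q.1 * a + q.2 * b by
              linear_combination (-q.1) * habc)]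
    have h8 : (∑ q ∈ Gset p, ξ ^ (q.1 * c).val * ξ ^ (q.2 * a).val * (s q.1 * s q.2)) = (∑ q ∈ Gset p, ξ ^ (q.1 * a).val * ξ ^ (q.2 * b).val * (s (-q.2) * s (q.1 - q.2))) := by
      calc (∑ q ∈ Gset p, ξ ^ (q.1 * c).val * ξ ^ (q.2 * a).val * (s q.1 * s q.2))
          = ∑ q ∈ Gset p, ξ ^ (-q.2 * c).val * ξ ^ ((q.1 - q.2) * a).val
              * (s (-q.2) * s (q.1 - q.2)) := sum_G_reindex3 _
        _ = (∑ q ∈ Gset p, ξ ^ (q.1 * a).val * ξ ^ (q.2 * b).val * (s (-q.2) * s (q.1 - q.2))) := Finset.sum_congr rfl fun q hq => by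
            rw [e_eq hξ (show -q.2 * c + (q.1 - q.2) * a = q.1 * a + q.2 * b by
              linear_combination (-q.2) * habc)]
    have h9 : (∑ q ∈ Gset p, ξ ^ (q.1 * a).val * ξ ^ (q.2 * b).val * (s q.1 * s q.2)) + (∑ q ∈ Gset p, ξ ^ (q.1 * a).val * ξ ^ (q.2 * b).val * (s (q.2 - q.1) * s (-q.1))) + (∑ q ∈ Gset p, ξ ^ (q.1 * a).val * ξ ^ (q.2 * b).val * (s (-q.2) * s (q.1 - q.2))) = (∑ q ∈ Gset p, t q.1 * (ξ ^ (q.1 * a).val * ξ ^ (q.2 * b).val)) + (∑ q ∈ Gset p, t q.2 * (ξ ^ (q.1 * a).val * ξ ^ (q.2 * b).val)) + (∑ q ∈ Gset p, t (q.2 - q.1) * (ξ ^ (q.1 * a).val * ξ ^ (q.2 * b).val)) := by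
      rw [← Finset.sum_add_distrib, ← Finset.sum_add_distrib, ← Finset.sum_add_distrib,
        ← Finset.sum_add_distrib]
      refine Finset.sum_congr rfl fun q hq => ?_
      obtain ⟨hq1, hq2, hq3⟩ := mem_Gset.1 hq
      have hrel := hquad q.1 (-q.2) (q.2 - q.1) hq1 (neg_ne_zero.2 hq2)
        (sub_ne_zero.2 (Ne.symm hq3)) (by ring)
      have o3 : s (q.1 - q.2) = - s (q.2 - q.1) := by
        rw [← neg_sub]; exact hodd _ (sub_ne_zero.2 (Ne.symm hq3))
      rw [hodd q.1 hq1, hodd q.2 hq2, o3]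
      rw [hodd q.2 hq2, heven q.2 hq2] at hrel
      linear_combination (-(ξ ^ (q.1 * a).val * ξ ^ (q.2 * b).val)) * hrel
    have h10 : (∑ q ∈ (Kf p ×ˢ Kf p).filter (fun q => ¬ q.1 ≠ q.2), ξ ^ (q.1 * a).val * ξ ^ (q.2 * b).val * (s q.1 * s q.2)) = (∑ j ∈ Kf p, s j ^ 2 * ξ ^ (j * c).val) := by
      calc (∑ q ∈ (Kf p ×ˢ Kf p).filter (fun q => ¬ q.1 ≠ q.2), ξ ^ (q.1 * a).val * ξ ^ (q.2 * b).val * (s q.1 * s q.2))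
          = ∑ j ∈ Kf p, ξ ^ (j * a).val * ξ ^ (j * b).val * (s j * s j) := sum_diag _
        _ = ∑ j ∈ Kf p, s (-j) ^ 2 * ξ ^ (-j * c).val := Finset.sum_congr rfl fun j hj => by
            rw [hodd j (mem_Kf.1 hj),
              e_mul_eq hξ (show j * a + j * b = -j * c by linear_combination j * habc)]
            ring
        _ = (∑ j ∈ Kf p, s j ^ 2 * ξ ^ (j * c).val) := sum_K_neg (fun x => s x ^ 2 * ξ ^ (x * c).val)
    have h11 : (∑ q ∈ (Kf p ×ˢ Kf p).filter (fun q => ¬ q.1 ≠ q.2), ξ ^ (q.1 * b).val * ξ ^ (q.2 * c).val * (s q.1 * s q.2)) = (∑ j ∈ Kf p, s j ^ 2 * ξ ^ (j * a).val) := by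
      calc (∑ q ∈ (Kf p ×ˢ Kf p).filter (fun q => ¬ q.1 ≠ q.2), ξ ^ (q.1 * b).val * ξ ^ (q.2 * c).val * (s q.1 * s q.2))
          = ∑ j ∈ Kf p, ξ ^ (j * b).val * ξ ^ (j * c).val * (s j * s j) := sum_diag _
        _ = ∑ j ∈ Kf p, s (-j) ^ 2 * ξ ^ (-j * a).val := Finset.sum_congr rfl fun j hj => by
            rw [hodd j (mem_Kf.1 hj),
              e_mul_eq hξ (show j * b + j * c = -j * a by linear_combination j * habc)]
            ring
        _ = (∑ j ∈ Kf p, s j ^ 2 * ξ ^ (j * a).val) := sum_K_neg (fun x => s x ^ 2 * ξ ^ (x * a).val)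
    have h12 : (∑ q ∈ (Kf p ×ˢ Kf p).filter (fun q => ¬ q.1 ≠ q.2), ξ ^ (q.1 * c).val * ξ ^ (q.2 * a).val * (s q.1 * s q.2)) = (∑ j ∈ Kf p, s j ^ 2 * ξ ^ (j * b).val) := by
      calc (∑ q ∈ (Kf p ×ˢ Kf p).filter (fun q => ¬ q.1 ≠ q.2), ξ ^ (q.1 * c).val * ξ ^ (q.2 * a).val * (s q.1 * s q.2))
          = ∑ j ∈ Kf p, ξ ^ (j * c).val * ξ ^ (j * a).val * (s j * s j) := sum_diag _
        _ = ∑ j ∈ Kf p, s (-j) ^ 2 * ξ ^ (-j * b).val := Finset.sum_congr rfl fun j hj => by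
            rw [hodd j (mem_Kf.1 hj),
              e_mul_eq hξ (show j * c + j * a = -j * b by linear_combination j * habc)]
            ring
        _ = (∑ j ∈ Kf p, s j ^ 2 * ξ ^ (j * b).val) := sum_K_neg (fun x => s x ^ 2 * ξ ^ (x * b).val)
    have h13 : (∑ q ∈ Gset p, t q.1 * (ξ ^ (q.1 * a).val * ξ ^ (q.2 * b).val)) = -(∑ j ∈ Kf p, t j * ξ ^ (j * a).val) - (∑ j ∈ Kf p, t j * ξ ^ (j * c).val) := by
      have inner : ∀ j ∈ Kf p, (∑ k ∈ (Kf p).erase j, t j * (ξ ^ (j * a).val * ξ ^ (k * b).val))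
          = -(t j * ξ ^ (j * a).val) - t j * ξ ^ (-j * c).val := by
        intro j hj
        have hfac : (∑ k ∈ (Kf p).erase j, t j * (ξ ^ (j * a).val * ξ ^ (k * b).val))
            = t j * ξ ^ (j * a).val * ∑ k ∈ (Kf p).erase j, ξ ^ (k * b).val := by
          rw [Finset.mul_sum]
          exact Finset.sum_congr rfl fun k _ => by ring
        rw [hfac, sum_K_erase hp hξ hb (mem_Kf.1 hj)]
        linear_combination (-(t j)) *
          e_mul_eq hξ (show j * a + j * b = -j * c by linear_combination j * habc)
      calc (∑ q ∈ Gset p, t q.1 * (ξ ^ (q.1 * a).val * ξ ^ (q.2 * b).val))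
          = ∑ j ∈ Kf p, ∑ k ∈ (Kf p).erase j, t j * (ξ ^ (j * a).val * ξ ^ (k * b).val) :=
            sum_G_iter _
        _ = ∑ j ∈ Kf p, (-(t j * ξ ^ (j * a).val) - t j * ξ ^ (-j * c).val) :=
            Finset.sum_congr rfl inner
        _ = -(∑ j ∈ Kf p, t j * ξ ^ (j * a).val) - (∑ j ∈ Kf p, t j * ξ ^ (-j * c).val) := by
            rw [Finset.sum_sub_distrib, Finset.sum_neg_distrib]
        _ = -(∑ j ∈ Kf p, t j * ξ ^ (j * a).val) - (∑ j ∈ Kf p, t j * ξ ^ (j * c).val) := by rw [hnegt c]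
    have h14 : (∑ q ∈ Gset p, t q.2 * (ξ ^ (q.1 * a).val * ξ ^ (q.2 * b).val)) = -(∑ j ∈ Kf p, t j * ξ ^ (j * b).val) - (∑ j ∈ Kf p, t j * ξ ^ (j * c).val) := by
      have inner : ∀ k ∈ Kf p, (∑ j ∈ (Kf p).erase k, t k * (ξ ^ (j * a).val * ξ ^ (k * b).val))
          = -(t k * ξ ^ (k * b).val) - t k * ξ ^ (-k * c).val := by
        intro k hk
        have hfac : (∑ j ∈ (Kf p).erase k, t k * (ξ ^ (j * a).val * ξ ^ (k * b).val))
            = t k * ξ ^ (k * b).val * ∑ j ∈ (Kf p).erase k, ξ ^ (j * a).val := by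
          rw [Finset.mul_sum]
          exact Finset.sum_congr rfl fun j _ => by ring
        rw [hfac, sum_K_erase hp hξ ha (mem_Kf.1 hk)]
        linear_combination (-(t k)) *
          e_mul_eq hξ (show k * b + k * a = -k * c by linear_combination k * habc)
      calc (∑ q ∈ Gset p, t q.2 * (ξ ^ (q.1 * a).val * ξ ^ (q.2 * b).val))
          = ∑ k ∈ Kf p, ∑ j ∈ (Kf p).erase k, t k * (ξ ^ (j * a).val * ξ ^ (k * b).val) :=
            sum_G_iter' _
        _ = ∑ k ∈ Kf p, (-(t k * ξ ^ (k * b).val) - t k * ξ ^ (-k * c).val) :=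
            Finset.sum_congr rfl inner
        _ = -(∑ j ∈ Kf p, t j * ξ ^ (j * b).val) - (∑ j ∈ Kf p, t j * ξ ^ (-j * c).val) := by
            rw [Finset.sum_sub_distrib, Finset.sum_neg_distrib]
        _ = -(∑ j ∈ Kf p, t j * ξ ^ (j * b).val) - (∑ j ∈ Kf p, t j * ξ ^ (j * c).val) := by rw [hnegt c]
    have h15 : (∑ q ∈ Gset p, t (q.2 - q.1) * (ξ ^ (q.1 * a).val * ξ ^ (q.2 * b).val)) = -(∑ j ∈ Kf p, t j * ξ ^ (j * b).val) - (∑ j ∈ Kf p, t j * ξ ^ (j * a).val) := by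
      have inner : ∀ m ∈ Kf p, (∑ u ∈ (Kf p).erase (-m),
            t (u + m - u) * (ξ ^ (u * a).val * ξ ^ ((u + m) * b).val))
          = -(t m * ξ ^ (m * b).val) - t m * ξ ^ (-m * a).val := by
        intro m hm
        have hfac : (∑ u ∈ (Kf p).erase (-m),
              t (u + m - u) * (ξ ^ (u * a).val * ξ ^ ((u + m) * b).val))
            = t m * ξ ^ (m * b).val * ∑ u ∈ (Kf p).erase (-m), ξ ^ (u * (a + b)).val := by
          rw [Finset.mul_sum]
          refine Finset.sum_congr rfl fun u _ => ?_
          rw [show u + m - u = m by ring]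
          linear_combination (t m) *
            e_eq hξ (show u * a + (u + m) * b = m * b + u * (a + b) by ring)
        rw [hfac, sum_K_erase hp hξ hab (neg_ne_zero.2 (mem_Kf.1 hm))]
        linear_combination (-(t m)) *
          e_mul_eq hξ (show m * b + -m * (a + b) = -m * a by ring)
      calc (∑ q ∈ Gset p, t (q.2 - q.1) * (ξ ^ (q.1 * a).val * ξ ^ (q.2 * b).val))
          = ∑ r ∈ G2set p, t (r.1 + r.2 - r.1) * (ξ ^ (r.1 * a).val * ξ ^ ((r.1 + r.2) * b).val) :=
            sum_G_to_G2 _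
        _ = ∑ m ∈ Kf p, ∑ u ∈ (Kf p).erase (-m),
              t (u + m - u) * (ξ ^ (u * a).val * ξ ^ ((u + m) * b).val) := sum_G2_iter _
        _ = ∑ m ∈ Kf p, (-(t m * ξ ^ (m * b).val) - t m * ξ ^ (-m * a).val) :=
            Finset.sum_congr rfl inner
        _ = -(∑ j ∈ Kf p, t j * ξ ^ (j * b).val) - (∑ j ∈ Kf p, t j * ξ ^ (-j * a).val) := by
            rw [Finset.sum_sub_distrib, Finset.sum_neg_distrib]
        _ = -(∑ j ∈ Kf p, t j * ξ ^ (j * b).val) - (∑ j ∈ Kf p, t j * ξ ^ (j * a).val) := by rw [hnegt a]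
    have hTa : ∀ m : ZMod p, T m = 2 * (∑ j ∈ Kf p, t j * ξ ^ (j * m).val) - (∑ j ∈ Kf p, s j ^ 2 * ξ ^ (j * m).val) := by
      intro m
      rw [hT' m]
      rw [Finset.sum_congr rfl (fun k (_ : k ∈ Kf p) =>
        show ξ ^ (k * m).val * (2 * t k - s k ^ 2)
          = 2 * (t k * ξ ^ (k * m).val) - s k ^ 2 * ξ ^ (k * m).val from by ring)]
      rw [Finset.sum_sub_distrib, ← Finset.mul_sum]
    linear_combination h1 + h2 + h3 + h4 + h5 + h6 + h7 + h8 + h9 + h10 + h11 + h12 + h13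
      + h14 + h15 + hTa a + hTa b + hTa c
end

section
/- Let p ≥ 5 be a prime and let s, t : (ℤ/pℤ) ∖ {0} → ℂ satisfy s_{−a} = −s_a, t_{−a} = t_a, and the quadratic relations s_a s_b + s_b s_c + s_c s_a + t_a + t_b + t_c = 0 for all nonzero a, b, c with a + b + c = 0. Define u_a = (1/(p−3)) ( Σ_{k≠0,a} s_{k−a} t_k − s_a t_a ). Then for all nonzero a, b ∈ ℤ/pℤ with a + b ≠ 0: s_a t_b + s_b t_a − (s_a + s_b) t_{a+b} + u_a + u_b + 2 u_{a+b} = 0. -/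
open Finset

private lemma sum_remove (p : ℕ) [NeZero p] (e : ZMod p) (he : e ≠ 0) (f : ZMod p → ℂ) :
    ∑ k ∈ univ.filter (fun k : ZMod p => k ≠ 0 ∧ k ≠ e), f k
      = (∑ j ∈ univ.filter (fun j : ZMod p => j ≠ 0), f j) - f e := by
  have hset : univ.filter (fun k : ZMod p => k ≠ 0 ∧ k ≠ e)
      = (univ.filter (fun j : ZMod p => j ≠ 0)).erase e := by
    ext x; simp [Finset.mem_erase]; tauto
  rw [hset, Finset.sum_erase_eq_sub (by simp [he])]

private lemma sum_remove3 (p : ℕ) [NeZero p] (e₁ e₂ : ZMod p) (h0 : e₂ ≠ 0) (h1 : e₂ ≠ e₁)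
    (f : ZMod p → ℂ) :
    ∑ k ∈ univ.filter (fun k : ZMod p => k ≠ 0 ∧ k ≠ e₁ ∧ k ≠ e₂), f k
      = (∑ j ∈ univ.filter (fun j : ZMod p => j ≠ 0 ∧ j ≠ e₁), f j) - f e₂ := by
  have hset : univ.filter (fun k : ZMod p => k ≠ 0 ∧ k ≠ e₁ ∧ k ≠ e₂)
      = (univ.filter (fun j : ZMod p => j ≠ 0 ∧ j ≠ e₁)).erase e₂ := by
    ext x; simp [Finset.mem_erase]; tauto
  rw [hset, Finset.sum_erase_eq_sub (by simp [h0, h1])]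

private lemma filter_swap (p : ℕ) [NeZero p] (e₁ e₂ : ZMod p) :
    univ.filter (fun j : ZMod p => j ≠ 0 ∧ j ≠ e₁ ∧ j ≠ e₂)
      = univ.filter (fun j : ZMod p => j ≠ 0 ∧ j ≠ e₂ ∧ j ≠ e₁) := by
  ext x; simp; tauto

private lemma sum_shift (p : ℕ) [NeZero p] (d : ZMod p) (f : ZMod p → ℂ) :
    ∑ k ∈ univ.filter (fun k : ZMod p => k ≠ 0 ∧ k ≠ d), f k
      = ∑ j ∈ univ.filter (fun j : ZMod p => j ≠ 0 ∧ j ≠ -d), f (j + d) := by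
  rw [Finset.sum_filter, Finset.sum_filter,
    ← Equiv.sum_comp (Equiv.addRight d) (fun k => if k ≠ 0 ∧ k ≠ d then f k else 0)]
  refine Finset.sum_congr rfl (fun j _ => ?_)
  simp only [Equiv.coe_addRight]
  refine if_congr ?_ rfl rfl
  constructor
  · rintro ⟨h1, h2⟩
    exact ⟨fun h => h2 (by rw [h, zero_add]), fun h => h1 (by rw [h, neg_add_cancel])⟩
  · rintro ⟨h1, h2⟩
    refine ⟨fun h => h2 (eq_neg_of_add_eq_zero_left h),
      fun h => h1 (add_right_cancel (h.trans (zero_add d).symm))⟩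

private lemma sum_odd_zero (p : ℕ) [NeZero p] (hne : ∀ x : ZMod p, x ≠ 0 → -x ≠ x)
    (f : ZMod p → ℂ) (hf : ∀ x : ZMod p, x ≠ 0 → f (-x) = - f x) :
    ∑ j ∈ univ.filter (fun j : ZMod p => j ≠ 0), f j = 0 := by
  refine Finset.sum_involution (fun j _ => -j) ?_ ?_ ?_ ?_
  · intro j hj
    simp only [mem_filter, mem_univ, true_and] at hj
    rw [hf j hj]; ring
  · intro j hj _
    simp only [mem_filter, mem_univ, true_and] at hj
    exact hne j hj
  · intro j hj
    simp only [mem_filter, mem_univ, true_and] at hj ⊢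
    exact neg_ne_zero.mpr hj
  · intro j hj; simp

private lemma card_two_removed (p : ℕ) [NeZero p] (e : ZMod p) (he : e ≠ 0) :
    (univ.filter (fun j : ZMod p => j ≠ 0 ∧ j ≠ e)).card = p - 2 := by
  have hset : univ.filter (fun k : ZMod p => k ≠ 0 ∧ k ≠ e)
      = (univ.filter (fun j : ZMod p => j ≠ 0)).erase e := by
    ext x; simp [Finset.mem_erase]; tauto
  rw [hset, Finset.card_erase_of_mem (by simp [he]), Finset.filter_ne', Finset.card_erase_of_mem (mem_univ _), Finset.card_univ, ZMod.card]
  omega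


/-- Under the symmetries and quadratic relations, with
u_a = (1/(p−3)) ( Σ_{k≠0,a} s_{k−a} t_k − s_a t_a ), for all nonzero a, b with a + b ≠ 0:
s_a t_b + s_b t_a − (s_a + s_b) t_{a+b} + u_a + u_b + 2 u_{a+b} = 0. -/
theorem statement7 (p : ℕ) (hp : p.Prime) (hp5 : 5 ≤ p) [NeZero p]
    (s t : ZMod p → ℂ)
    (hodd : ∀ a : ZMod p, a ≠ 0 → s (-a) = - s a)
    (heven : ∀ a : ZMod p, a ≠ 0 → t (-a) = t a)
    (hquad : ∀ a b c : ZMod p, a ≠ 0 → b ≠ 0 → c ≠ 0 → a + b + c = 0 →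
      s a * s b + s b * s c + s c * s a + t a + t b + t c = 0)
    (u : ZMod p → ℂ)
    (hu : ∀ a : ZMod p, a ≠ 0 → u a = (1 / ((p : ℂ) - 3)) *
      ((∑ k ∈ univ.filter (fun k : ZMod p => k ≠ 0 ∧ k ≠ a), s (k - a) * t k) - s a * t a)) :
    ∀ a b : ZMod p, a ≠ 0 → b ≠ 0 → a + b ≠ 0 →
      s a * t b + s b * t a - (s a + s b) * t (a + b) + u a + u b + 2 * u (a + b) = 0 := by
  intro a b ha hb hab
  haveI : Fact p.Prime := ⟨hp⟩
  -- basic facts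
  have hneg : ∀ x : ZMod p, x ≠ 0 → -x ≠ x := by
    intro x hx h
    have h2 : (2 : ZMod p) * x = 0 := by linear_combination -h
    rcases mul_eq_zero.mp h2 with h2 | h2
    · have h3 : ((2 : ℕ) : ZMod p) = 0 := by exact_mod_cast h2
      have h4 := (ZMod.natCast_eq_zero_iff 2 p).mp h3
      have := Nat.le_of_dvd (by norm_num) h4
      omega
    · exact hx h2
  have hp3 : ((p : ℂ) - 3) ≠ 0 := by
    intro h
    have h3 : ((p : ℕ) : ℂ) = ((3 : ℕ) : ℂ) := by push_cast; linear_combination h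
    have : p = 3 := Nat.cast_injective h3
    omega
  have hR : ∀ x y : ZMod p, x ≠ 0 → y ≠ 0 → x + y ≠ 0 →
      s x * s y - (s x + s y) * s (x + y) + t x + t y + t (x + y) = 0 := by
    intro x y hx hy hxy
    have h := hquad x y (-(x + y)) hx hy (neg_ne_zero.mpr hxy) (by ring)
    rw [hodd _ hxy, heven _ hxy] at h
    linear_combination h
  have hEs : ∑ j ∈ univ.filter (fun j : ZMod p => j ≠ 0), s j = 0 :=
    sum_odd_zero p hneg s (fun x hx => hodd x hx)
  -- the M sums
  have hM : ∀ d : ZMod p, d ≠ 0 →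
      ∑ j ∈ univ.filter (fun j : ZMod p => j ≠ 0 ∧ j ≠ -d), s j * s (j + d)
        = 2 * s d * s d + 2 * (∑ j ∈ univ.filter (fun j : ZMod p => j ≠ 0), t j)
          + ((p : ℂ) - 4) * t d := by
    intro d hd
    have hnd : (-d : ZMod p) ≠ 0 := neg_ne_zero.mpr hd
    have hzero : ∑ j ∈ univ.filter (fun j : ZMod p => j ≠ 0 ∧ j ≠ -d),
        (s j * s d - (s j + s d) * s (j + d) + t j + t d + t (j + d)) = 0 := by
      refine Finset.sum_eq_zero (fun j hj => ?_)
      simp only [mem_filter, mem_univ, true_and] at hj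
      exact hR j d hj.1 hd (fun h => hj.2 (eq_neg_of_add_eq_zero_left h))
    have hexp : ∑ j ∈ univ.filter (fun j : ZMod p => j ≠ 0 ∧ j ≠ -d),
        (s j * s d - (s j + s d) * s (j + d) + t j + t d + t (j + d))
        = (∑ j ∈ univ.filter (fun j : ZMod p => j ≠ 0 ∧ j ≠ -d), s j * s d)
          - (∑ j ∈ univ.filter (fun j : ZMod p => j ≠ 0 ∧ j ≠ -d), s j * s (j + d))
          - (∑ j ∈ univ.filter (fun j : ZMod p => j ≠ 0 ∧ j ≠ -d), s d * s (j + d))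
          + (∑ j ∈ univ.filter (fun j : ZMod p => j ≠ 0 ∧ j ≠ -d), t j)
          + (∑ _j ∈ univ.filter (fun j : ZMod p => j ≠ 0 ∧ j ≠ -d), t d)
          + (∑ j ∈ univ.filter (fun j : ZMod p => j ≠ 0 ∧ j ≠ -d), t (j + d)) := by
      simp only [← Finset.sum_add_distrib, ← Finset.sum_sub_distrib]
      exact Finset.sum_congr rfl (fun j _ => by ring)
    rw [hexp] at hzero
    simp only [← Finset.sum_mul, ← Finset.mul_sum] at hzero
    rw [Finset.sum_const, card_two_removed p (-d) hnd, nsmul_eq_mul,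
      Nat.cast_sub (by omega : 2 ≤ p)] at hzero
    have d1 : ∑ j ∈ univ.filter (fun j : ZMod p => j ≠ 0 ∧ j ≠ -d), s j = s d := by
      rw [sum_remove p (-d) hnd s, hEs, hodd d hd]; ring
    have d2 : ∑ j ∈ univ.filter (fun j : ZMod p => j ≠ 0 ∧ j ≠ -d), s (j + d) = - s d := by
      rw [← sum_shift p d s, sum_remove p d hd s, hEs]; ring
    have d3 : ∑ j ∈ univ.filter (fun j : ZMod p => j ≠ 0 ∧ j ≠ -d), t j
        = (∑ j ∈ univ.filter (fun j : ZMod p => j ≠ 0), t j) - t d := by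
      rw [sum_remove p (-d) hnd t, heven d hd]
    have d4 : ∑ j ∈ univ.filter (fun j : ZMod p => j ≠ 0 ∧ j ≠ -d), t (j + d)
        = (∑ j ∈ univ.filter (fun j : ZMod p => j ≠ 0), t j) - t d := by
      rw [← sum_shift p d t, sum_remove p d hd t]
    rw [d1, d2, d3, d4] at hzero
    push_cast at hzero ⊢
    linear_combination -hzero
  -- reindexing of the V sums
  have hV : ∀ d : ZMod p,
      (∑ k ∈ univ.filter (fun k : ZMod p => k ≠ 0 ∧ k ≠ d), s (k - d) * t k)
        = ∑ j ∈ univ.filter (fun j : ZMod p => j ≠ 0 ∧ j ≠ -d), s j * t (j + d) := by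
    intro d
    rw [sum_shift p d (fun k => s (k - d) * t k)]
    exact Finset.sum_congr rfl (fun j _ => by rw [add_sub_cancel_right])
  -- the main summed relation, generically in (x, y) with x + y = a + b
  have EQgen : ∀ x y : ZMod p, x ≠ 0 → y ≠ 0 → x + y = a + b →
      s y * ((∑ j ∈ univ.filter (fun j : ZMod p => j ≠ 0 ∧ j ≠ -x), s j * s (j + x))
          - s (a + b) * s y)
      - (∑ j ∈ univ.filter (fun j : ZMod p => j ≠ 0 ∧ j ≠ -x ∧ j ≠ -(a + b)),
          s j * s (j + x) * s (j + (a + b)))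
      - s y * ((∑ j ∈ univ.filter (fun j : ZMod p => j ≠ 0 ∧ j ≠ -(a + b)), s j * s (j + (a + b)))
          + s x * s y)
      + ((∑ j ∈ univ.filter (fun j : ZMod p => j ≠ 0 ∧ j ≠ -x), s j * t (j + x))
          + s (a + b) * t y)
      + (s x + s (a + b)) * t y
      + ((∑ j ∈ univ.filter (fun j : ZMod p => j ≠ 0 ∧ j ≠ -(a + b)), s j * t (j + (a + b)))
          + s x * t y) = 0 := by
    intro x y hx hy hxyab
    have hxy : x + y ≠ 0 := by rw [hxyab]; exact hab
    have hnx : (-x : ZMod p) ≠ 0 := neg_ne_zero.mpr hx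
    have hnab : (-(a + b) : ZMod p) ≠ 0 := neg_ne_zero.mpr hab
    have hne1 : (-(a + b) : ZMod p) ≠ -x := by
      intro h; exact hy (by linear_combination hxyab - h)
    have hzero : ∑ j ∈ univ.filter (fun j : ZMod p => j ≠ 0 ∧ j ≠ -x ∧ j ≠ -(a + b)),
        s j * (s (j + x) * s y - (s (j + x) + s y) * s (j + (a + b))
          + t (j + x) + t y + t (j + (a + b))) = 0 := by
      refine Finset.sum_eq_zero (fun j hj => ?_)
      simp only [mem_filter, mem_univ, true_and] at hj
      have h1 : j + x ≠ 0 := fun h => hj.2.1 (eq_neg_of_add_eq_zero_left h)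
      have h2 : j + x + y ≠ 0 := by
        rw [add_assoc, hxyab]
        exact fun h => hj.2.2 (eq_neg_of_add_eq_zero_left h)
      have h := hR (j + x) y h1 hy h2
      have e : j + x + y = j + (a + b) := by rw [add_assoc, hxyab]
      rw [e] at h
      exact mul_eq_zero_of_right _ h
    have hexp : ∑ j ∈ univ.filter (fun j : ZMod p => j ≠ 0 ∧ j ≠ -x ∧ j ≠ -(a + b)),
        s j * (s (j + x) * s y - (s (j + x) + s y) * s (j + (a + b))
          + t (j + x) + t y + t (j + (a + b)))
        = (∑ j ∈ univ.filter (fun j : ZMod p => j ≠ 0 ∧ j ≠ -x ∧ j ≠ -(a + b)),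
            (s j * s (j + x)) * s y)
          - (∑ j ∈ univ.filter (fun j : ZMod p => j ≠ 0 ∧ j ≠ -x ∧ j ≠ -(a + b)),
            s j * s (j + x) * s (j + (a + b)))
          - (∑ j ∈ univ.filter (fun j : ZMod p => j ≠ 0 ∧ j ≠ -x ∧ j ≠ -(a + b)),
            s y * (s j * s (j + (a + b))))
          + (∑ j ∈ univ.filter (fun j : ZMod p => j ≠ 0 ∧ j ≠ -x ∧ j ≠ -(a + b)),
            s j * t (j + x))
          + (∑ j ∈ univ.filter (fun j : ZMod p => j ≠ 0 ∧ j ≠ -x ∧ j ≠ -(a + b)),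
            s j * t y)
          + (∑ j ∈ univ.filter (fun j : ZMod p => j ≠ 0 ∧ j ≠ -x ∧ j ≠ -(a + b)),
            s j * t (j + (a + b))) := by
      simp only [← Finset.sum_add_distrib, ← Finset.sum_sub_distrib]
      exact Finset.sum_congr rfl (fun j _ => by ring)
    rw [hexp] at hzero
    simp only [← Finset.sum_mul, ← Finset.mul_sum] at hzero
    have c1 : ∑ j ∈ univ.filter (fun j : ZMod p => j ≠ 0 ∧ j ≠ -x ∧ j ≠ -(a + b)),
        s j * s (j + x)
        = (∑ j ∈ univ.filter (fun j : ZMod p => j ≠ 0 ∧ j ≠ -x), s j * s (j + x))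
          - s (a + b) * s y := by
      rw [sum_remove3 p (-x) (-(a + b)) hnab hne1 (fun j => s j * s (j + x)),
        show (-(a + b) : ZMod p) + x = -y from by linear_combination hxyab,
        hodd (a + b) hab, hodd y hy]
      ring
    have c2 : ∑ j ∈ univ.filter (fun j : ZMod p => j ≠ 0 ∧ j ≠ -x ∧ j ≠ -(a + b)),
        s j * s (j + (a + b))
        = (∑ j ∈ univ.filter (fun j : ZMod p => j ≠ 0 ∧ j ≠ -(a + b)), s j * s (j + (a + b)))
          + s x * s y := by
      rw [filter_swap p (-x) (-(a + b)),
        sum_remove3 p (-(a + b)) (-x) hnx (Ne.symm hne1) (fun j => s j * s (j + (a + b))),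
        show (-x : ZMod p) + (a + b) = y from by linear_combination - hxyab,
        hodd x hx]
      ring
    have c3 : ∑ j ∈ univ.filter (fun j : ZMod p => j ≠ 0 ∧ j ≠ -x ∧ j ≠ -(a + b)),
        s j * t (j + x)
        = (∑ j ∈ univ.filter (fun j : ZMod p => j ≠ 0 ∧ j ≠ -x), s j * t (j + x))
          + s (a + b) * t y := by
      rw [sum_remove3 p (-x) (-(a + b)) hnab hne1 (fun j => s j * t (j + x)),
        show (-(a + b) : ZMod p) + x = -y from by linear_combination hxyab,
        hodd (a + b) hab, heven y hy]
      ring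
    have c4 : ∑ j ∈ univ.filter (fun j : ZMod p => j ≠ 0 ∧ j ≠ -x ∧ j ≠ -(a + b)),
        s j * t (j + (a + b))
        = (∑ j ∈ univ.filter (fun j : ZMod p => j ≠ 0 ∧ j ≠ -(a + b)), s j * t (j + (a + b)))
          + s x * t y := by
      rw [filter_swap p (-x) (-(a + b)),
        sum_remove3 p (-(a + b)) (-x) hnx (Ne.symm hne1) (fun j => s j * t (j + (a + b))),
        show (-x : ZMod p) + (a + b) = y from by linear_combination - hxyab,
        hodd x hx]
      ring
    have c5 : ∑ j ∈ univ.filter (fun j : ZMod p => j ≠ 0 ∧ j ≠ -x ∧ j ≠ -(a + b)), s j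
        = s x + s (a + b) := by
      rw [sum_remove3 p (-x) (-(a + b)) hnab hne1 s, sum_remove p (-x) hnx s, hEs,
        hodd x hx, hodd (a + b) hab]
      ring
    rw [c1, c2, c3, c4, c5] at hzero
    linear_combination hzero
  -- the reflection identity for the cubic sums
  have hNN : (∑ j ∈ univ.filter (fun j : ZMod p => j ≠ 0 ∧ j ≠ -a ∧ j ≠ -(a + b)),
        s j * s (j + a) * s (j + (a + b)))
      + (∑ j ∈ univ.filter (fun j : ZMod p => j ≠ 0 ∧ j ≠ -b ∧ j ≠ -(a + b)),
        s j * s (j + b) * s (j + (a + b))) = 0 := by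
    have key : (∑ j ∈ univ.filter (fun j : ZMod p => j ≠ 0 ∧ j ≠ -a ∧ j ≠ -(a + b)),
          s j * s (j + a) * s (j + (a + b)))
        = ∑ j ∈ univ.filter (fun j : ZMod p => j ≠ 0 ∧ j ≠ -b ∧ j ≠ -(a + b)),
          -(s j * s (j + b) * s (j + (a + b))) := by
      rw [Finset.sum_filter, Finset.sum_filter,
        ← Equiv.sum_comp (⟨fun x => -x - (a + b), fun x => -x - (a + b),
          fun x => by ring, fun x => by ring⟩ : ZMod p ≃ ZMod p)
          (fun k => if k ≠ 0 ∧ k ≠ -a ∧ k ≠ -(a + b)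
            then s k * s (k + a) * s (k + (a + b)) else 0)]
      refine Finset.sum_congr rfl (fun j _ => ?_)
      simp only [Equiv.coe_fn_mk]
      have hiff : (-j - (a + b) ≠ 0 ∧ -j - (a + b) ≠ -a ∧ -j - (a + b) ≠ -(a + b))
          ↔ (j ≠ 0 ∧ j ≠ -b ∧ j ≠ -(a + b)) := by
        constructor
        · rintro ⟨h1, h2, h3⟩
          exact ⟨fun h => h3 (by rw [h]; ring), fun h => h2 (by rw [h]; ring),
            fun h => h1 (by rw [h]; ring)⟩
        · rintro ⟨h1, h2, h3⟩
          exact ⟨fun h => h3 (by linear_combination -h), fun h => h2 (by linear_combination -h),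
            fun h => h1 (by linear_combination -h)⟩
      rw [if_congr hiff rfl rfl]
      by_cases hj : j ≠ 0 ∧ j ≠ -b ∧ j ≠ -(a + b)
      · rw [if_pos hj, if_pos hj]
        obtain ⟨hj1, hj2, hj3⟩ := hj
        have e1 : -j - (a + b) = -(j + (a + b)) := by ring
        have e2 : -j - (a + b) + a = -(j + b) := by ring
        have e3 : -j - (a + b) + (a + b) = -j := by ring
        rw [e3, e2, e1, hodd _ (fun h => hj3 (eq_neg_of_add_eq_zero_left h)),
          hodd _ (fun h => hj2 (eq_neg_of_add_eq_zero_left h)), hodd _ hj1]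
        ring
      · rw [if_neg hj, if_neg hj]
    rw [key, Finset.sum_neg_distrib]
    exact neg_add_cancel _
  -- put everything together
  have EQ1 := EQgen a b ha hb rfl
  have EQ2 := EQgen b a hb ha (add_comm b a)
  have hMa := hM a ha
  have hMb := hM b hb
  have hMc := hM (a + b) hab
  have hVa := hV a
  have hVb := hV b
  have hVc := hV (a + b)
  have hRab := hR a b ha hb hab
  rw [hu a ha, hu b hb, hu (a + b) hab]
  field_simp
  linear_combination EQ1 + EQ2 + hNN - s b * hMa - s a * hMb + (s a + s b) * hMc
    - (s a + s b + 2 * s (a + b)) * hRab + hVa + hVb + 2 * hVc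
end

section
/- Let p ≥ 5 be a prime and let s, t : (ℤ/pℤ) ∖ {0} → ℂ satisfy s_{−a} = −s_a, t_{−a} = t_a, and the quadratic relations s_a s_b + s_b s_c + s_c s_a + t_a + t_b + t_c = 0 for all nonzero a, b, c with a + b + c = 0. Then there exists a unique family of formal power series f_a ∈ ℂ[[z]], indexed by a ∈ (ℤ/pℤ) ∖ {0}, such that for every a: the constant coefficient of f_a is s_a, the coefficient of z in f_a is t_a, and −1 + z² f_a′ = −(1/(p−2)) ( Σ_{k≠0,a} (1 + z f_k)(1 + z f_{a−k}) + 2 s_a z (1 + z f_a) ), where f_a′ denotes the formal derivative of f_a. (Equivalently, the Laurent series r̂_a = 1/z + f_a satisfy d r̂_a/dz = −(1/(p−2))( Σ_{k≠0,a} r̂_k r̂_{a−k} + 2 r̂_a s_a ).) -/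
/-!
Comparing coefficients turns the equation for `f_a = ∑ c_n(a) zⁿ` into a recursion. The
coefficient of `z` asks for `∑_{k ≠ 0} s_k = 0`, which is the oddness of `s`; that of `z²`,
with `c₀ = s` and `c₁ = t`, is the quadratic relation summed over the splittings
`a = k + (a - k)`. For `n ≥ 1` the coefficient of `z^(n+2)` is the linear system
`((p-2)(n+1) - 2) x_a + 2 ∑_{b ≠ 0} x_b = (terms in c₀, …, cₙ)` for `x = c_{n+1}`, whose matrix
`λ I + 2 J` has eigenvalues `(p-2)(n+1) - 2` and `(p-2)(n+3)`, both nonzero for `p ≥ 4`. So every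
coefficient is determined by the lower ones, which gives existence and uniqueness together.
-/

open Finset PowerSeries

/-- A family `f` of formal power series (indexed by the nonzero residues mod p) is a
*standard solution* for the data `(s, t)` if each `f a` has constant coefficient `s a`,
coefficient of `z` equal to `t a`, and the family satisfies (as an identity in ℂ[[z]])
`−1 + z² f_a′ = −(1/(p−2)) ( Σ_{k≠0,a} (1 + z f_k)(1 + z f_{a−k}) + 2 s_a z (1 + z f_a) )`.
Equivalently, the Laurent series `r̂_a = 1/z + f_a` satisfy
`d r̂_a/dz = −(1/(p−2))( Σ_{k≠0,a} r̂_k r̂_{a−k} + 2 r̂_a s_a )`. -/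
def IsStandardSolution (p : ℕ) [NeZero p] (s t : ZMod p → ℂ)
    (f : ZMod p → PowerSeries ℂ) : Prop :=
  ∀ a : ZMod p, a ≠ 0 →
    PowerSeries.constantCoeff (R := ℂ) (f a) = s a ∧
    PowerSeries.coeff (R := ℂ) 1 (f a) = t a ∧
    -1 + PowerSeries.X ^ 2 * PowerSeries.derivative ℂ (f a) =
      PowerSeries.C (R := ℂ) (-(1 / ((p : ℂ) - 2))) *
        ((∑ k ∈ univ.filter (fun k : ZMod p => k ≠ 0 ∧ k ≠ a),
            (1 + PowerSeries.X * f k) * (1 + PowerSeries.X * f (a - k))) +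
          2 * PowerSeries.C (R := ℂ) (s a) * PowerSeries.X * (1 + PowerSeries.X * f a))

section ErasedSums

variable {G K : Type*} [AddCommGroup G] [Fintype G] [DecidableEq G] [Field K]

theorem filter_ne_zero_and_ne_eq (a : G) :
    univ.filter (fun k : G => k ≠ 0 ∧ k ≠ a) = (univ.erase 0).erase a := by
  ext k
  simp [and_comm]

theorem card_erase_zero_erase {a : G} (ha : a ≠ 0) :
    #((univ.erase 0).erase a) = Fintype.card G - 2 := by
  rw [card_erase_of_mem (by simpa), card_erase_of_mem (mem_univ _), card_univ, Nat.sub_sub]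

theorem sum_erase_zero_erase_sub {M : Type*} [AddCommMonoid M] (a : G) (g : G → M) :
    ∑ k ∈ (univ.erase 0).erase a, g (a - k) = ∑ k ∈ (univ.erase 0).erase a, g k :=
  sum_equiv (Equiv.subLeft a) (fun k => by
    simp only [mem_erase, mem_univ, Equiv.subLeft_apply, ne_eq, sub_eq_self, sub_eq_zero, and_true]
    tauto) fun _ _ => rfl

theorem sum_one_add_X_mul_mul_eq (f : G → K⟦X⟧) (s : K) (a : G) :
    ∑ k ∈ (univ.erase 0).erase a, (1 + X * f k) * (1 + X * f (a - k)) +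
        2 * C s * X * (1 + X * f a) =
      C (#((univ.erase 0).erase a) : K) + X * (C 2 * (∑ k ∈ (univ.erase 0).erase a, f k + C s)) +
        X ^ 2 * (∑ k ∈ (univ.erase 0).erase a, f k * f (a - k) + C (2 * s) * f a) := by
  have hterm : ∀ k, (1 + X * f k) * (1 + X * f (a - k)) =
      1 + X * f k + X * f (a - k) + X ^ 2 * (f k * f (a - k)) := fun k => by ring
  simp only [hterm, sum_add_distrib, ← mul_sum, sum_const, nsmul_eq_mul, mul_one,
    sum_erase_zero_erase_sub a f, map_mul, map_natCast, map_ofNat]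
  ring

theorem sum_erase_zero_eq_zero_of_odd [CharZero K] {s : G → K}
    (hodd : ∀ a : G, a ≠ 0 → s (-a) = -s a) : ∑ k ∈ univ.erase 0, s k = 0 := by
  have hneg : ∑ k ∈ univ.erase 0, s k = ∑ k ∈ univ.erase 0, s (-k) :=
    sum_equiv (Equiv.neg G) (by simp) (by simp)
  rw [sum_congr rfl fun k hk => hodd k (ne_of_mem_erase hk), sum_neg_distrib] at hneg
  have : (2 : K) * ∑ k ∈ univ.erase 0, s k = 0 := by linear_combination hneg
  simpa using this

theorem sum_erase_zero_erase_of_odd [CharZero K] {s : G → K}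
    (hodd : ∀ a : G, a ≠ 0 → s (-a) = -s a) {a : G} (ha : a ≠ 0) :
    ∑ k ∈ (univ.erase 0).erase a, s k = -s a := by
  rw [sum_erase_eq_sub (by simpa), sum_erase_zero_eq_zero_of_odd hodd, zero_sub]

theorem sum_quadratic_relation [CharZero K] {s t : G → K}
    (hodd : ∀ a : G, a ≠ 0 → s (-a) = -s a)
    (heven : ∀ a : G, a ≠ 0 → t (-a) = t a)
    (hquad : ∀ a b c : G, a ≠ 0 → b ≠ 0 → c ≠ 0 → a + b + c = 0 →
      s a * s b + s b * s c + s c * s a + t a + t b + t c = 0)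
    {a : G} (ha : a ≠ 0) :
    #((univ.erase 0).erase a) * t a + 2 * ∑ k ∈ (univ.erase 0).erase a, t k +
      (∑ k ∈ (univ.erase 0).erase a, s k * s (a - k) + 2 * s a * s a) = 0 := by
  have hsplit : ∀ k ∈ (univ.erase 0).erase a,
      -(s a * s k) + s k * s (a - k) - s (a - k) * s a + t a + t k + t (a - k) = 0 := by
    intro k hk
    obtain ⟨hka, hk0, -⟩ := mem_erase.1 hk |>.imp_right mem_erase.1
    have h := hquad (-a) k (a - k) (neg_ne_zero.2 ha) hk0 (sub_ne_zero.2 (Ne.symm hka))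
      (by abel)
    rw [hodd a ha, heven a ha] at h
    linear_combination h
  have hsum := sum_eq_zero hsplit
  simp only [sum_add_distrib, sum_sub_distrib, sum_neg_distrib, ← mul_sum, ← sum_mul,
    sum_erase_zero_erase_sub a s, sum_erase_zero_erase_sub a t, sum_const, nsmul_eq_mul,
    sum_erase_zero_erase_of_odd hodd ha] at hsum
  linear_combination hsum

end ErasedSums

namespace PowerSeries

variable {K : Type*} [Field K]

theorem add_X_mul_eq_zero_iff (B E : K⟦X⟧) :
    B + X * E = 0 ↔ constantCoeff B = 0 ∧ ∀ n, coeff (n + 1) B + coeff n E = 0 := by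
  rw [PowerSeries.ext_iff]
  constructor
  · intro h
    refine ⟨by simpa using h 0, fun n => by simpa using h (n + 1)⟩
  · rintro ⟨h0, hsucc⟩ (_ | n)
    · simpa using h0
    · simpa using hsucc n

theorem neg_one_add_X_sq_mul_derivative_eq_iff {q : K} (hq : q ≠ 0) (F B D : K⟦X⟧) :
    -1 + X ^ 2 * derivative K F = C (-(1 / q)) * (C q + X * B + X ^ 2 * D) ↔
      B + X * (D + C q * derivative K F) = 0 := by
  have hC : C (-(1 / q)) * C q = (-1 : K⟦X⟧) := by
    rw [← map_mul, neg_mul, one_div, inv_mul_cancel₀ hq, map_neg, map_one]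
  rw [eq_comm, ← sub_eq_zero,
    show C (-(1 / q)) * (C q + X * B + X ^ 2 * D) - (-1 + X ^ 2 * derivative K F) =
      C (-(1 / q)) * X * (B + X * (D + C q * derivative K F)) by
      linear_combination (1 - X ^ 2 * derivative K F) * hC]
  simp [hq, X_ne_zero]

end PowerSeries

section ShermanMorrison

variable {ι K : Type*} [Field K]

/-- The solution `x` of `l * x a + m * ∑ b ∈ U, x b = y a` (`a ∈ U`), given by the
Sherman–Morrison formula. -/
def shermanMorrison (U : Finset ι) (l m : K) (y : ι → K) (a : ι) : K :=
  (y a - m * ((∑ b ∈ U, y b) / (l + #U * m))) / l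

theorem shermanMorrison_congr {U : Finset ι} {l m : K} {y y' : ι → K}
    (h : ∀ b ∈ U, y b = y' b) {a : ι} (ha : a ∈ U) :
    shermanMorrison U l m y a = shermanMorrison U l m y' a := by
  simp only [shermanMorrison, h a ha, sum_congr rfl h]

theorem forall_mul_add_mul_sum_eq_iff {U : Finset ι} {l m : K} (hl : l ≠ 0)
    (hlm : l + #U * m ≠ 0) {x y : ι → K} :
    (∀ a ∈ U, l * x a + m * ∑ b ∈ U, x b = y a) ↔
      ∀ a ∈ U, x a = shermanMorrison U l m y a := by
  constructor
  · intro h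
    have hsum : ∑ b ∈ U, x b = (∑ b ∈ U, y b) / (l + #U * m) := by
      rw [eq_div_iff hlm, ← sum_congr rfl h]
      simp only [sum_add_distrib, ← mul_sum, sum_const, nsmul_eq_mul]
      ring
    intro a ha
    rw [shermanMorrison, ← hsum, ← h a ha]
    field_simp
    ring
  · intro h
    have hsum : ∑ b ∈ U, x b = (∑ b ∈ U, y b) / (l + #U * m) := by
      rw [sum_congr rfl h]
      unfold shermanMorrison
      rw [← sum_div, sum_sub_distrib, sum_const, nsmul_eq_mul]
      field_simp
      ring
    intro a ha
    rw [h a ha, hsum, shermanMorrison]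
    field_simp
    ring

end ShermanMorrison

namespace StandardSolution

variable {p : ℕ} [NeZero p]

theorem natCast_card_erase_zero_erase (hp : 2 ≤ p) {a : ZMod p} (ha : a ≠ 0) :
    (#((univ.erase 0).erase a) : ℂ) = p - 2 := by
  rw [card_erase_zero_erase ha, ZMod.card, Nat.cast_sub hp, Nat.cast_ofNat]

/-- Coefficient of `z^n` in `∑_{k ≠ 0, a} f_k f_{a-k} + 2 s_a f_a`, where `c n b` is that
of `f_b`. -/
def quadPart (s : ZMod p → ℂ) (c : ℕ → ZMod p → ℂ) (n : ℕ) (a : ZMod p) : ℂ :=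
  ∑ k ∈ (univ.erase 0).erase a, ∑ x ∈ antidiagonal n, c x.1 k * c x.2 (a - k) + 2 * s a * c n a

/-- The relation that the coefficient of `z^(n+2)` in the equation of `IsStandardSolution`
imposes on the coefficients `c n b` of the series `f_b`. -/
def residual (s : ZMod p → ℂ) (c : ℕ → ZMod p → ℂ) (n : ℕ) (a : ZMod p) : ℂ :=
  (p - 2) * (n + 1) * c (n + 1) a + 2 * ∑ k ∈ (univ.erase 0).erase a, c (n + 1) k +
    quadPart s c n a

theorem equation_iff (hp : 3 ≤ p) (s : ZMod p → ℂ) (f : ZMod p → ℂ⟦X⟧) {a : ZMod p}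
    (ha : a ≠ 0) :
    -1 + PowerSeries.X ^ 2 * PowerSeries.derivative ℂ (f a) =
      PowerSeries.C (R := ℂ) (-(1 / ((p : ℂ) - 2))) *
        ((∑ k ∈ univ.filter (fun k : ZMod p => k ≠ 0 ∧ k ≠ a),
            (1 + PowerSeries.X * f k) * (1 + PowerSeries.X * f (a - k))) +
          2 * PowerSeries.C (R := ℂ) (s a) * PowerSeries.X * (1 + PowerSeries.X * f a)) ↔
      ∑ k ∈ (univ.erase 0).erase a, constantCoeff (f k) + s a = 0 ∧
        ∀ n, residual s (fun n b => coeff n (f b)) n a = 0 := by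
  have hq : (p : ℂ) - 2 ≠ 0 := sub_ne_zero.2 (by exact_mod_cast (by omega : p ≠ 2))
  rw [filter_ne_zero_and_ne_eq, sum_one_add_X_mul_mul_eq,
    natCast_card_erase_zero_erase (by omega) ha, neg_one_add_X_sq_mul_derivative_eq_iff hq,
    add_X_mul_eq_zero_iff]
  refine and_congr (by simp) (forall_congr' fun n => ?_)
  simp only [map_add, map_sum, coeff_C_mul, coeff_C, coeff_derivative, Nat.add_one_ne_zero,
    if_false, add_zero]
  simp only [coeff_mul, residual, quadPart]
  constructor <;> intro h <;> linear_combination h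

theorem isStandardSolution_iff (hp : 3 ≤ p) {s : ZMod p → ℂ}
    (hodd : ∀ a : ZMod p, a ≠ 0 → s (-a) = -s a) (t : ZMod p → ℂ) (f : ZMod p → ℂ⟦X⟧) :
    IsStandardSolution p s t f ↔ ∀ a : ZMod p, a ≠ 0 →
      constantCoeff (f a) = s a ∧ coeff 1 (f a) = t a ∧
        ∀ n, residual s (fun n b => coeff n (f b)) n a = 0 := by
  refine ⟨fun h a ha => ?_, fun h a ha => ?_⟩
  · obtain ⟨h0, h1, heq⟩ := h a ha
    exact ⟨h0, h1, ((equation_iff hp s f ha).1 heq).2⟩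
  · obtain ⟨h0, h1, hres⟩ := h a ha
    refine ⟨h0, h1, (equation_iff hp s f ha).2 ⟨?_, hres⟩⟩
    rw [sum_congr rfl fun k hk => (h k (ne_of_mem_erase (mem_of_mem_erase hk))).1,
      sum_erase_zero_erase_of_odd hodd ha, neg_add_cancel]

theorem quadPart_congr (s : ZMod p → ℂ) {c c' : ℕ → ZMod p → ℂ} {n : ℕ}
    (h : ∀ i ≤ n, ∀ b : ZMod p, b ≠ 0 → c i b = c' i b) {a : ZMod p} (ha : a ≠ 0) :
    quadPart s c n a = quadPart s c' n a := by
  unfold quadPart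
  congr 1
  · refine sum_congr rfl fun k hk => sum_congr rfl fun x hx => ?_
    obtain ⟨hka, hk0, -⟩ := mem_erase.1 hk |>.imp_right mem_erase.1
    rw [h x.1 (HasAntidiagonal.antidiagonal.fst_le hx) k hk0,
      h x.2 (HasAntidiagonal.antidiagonal.snd_le hx) (a - k) (sub_ne_zero.2 (Ne.symm hka))]
  · rw [h n le_rfl a ha]

theorem residual_add_one_eq (s : ZMod p → ℂ) (c : ℕ → ZMod p → ℂ) (n : ℕ) {a : ZMod p}
    (ha : a ≠ 0) :
    residual s c (n + 1) a = ((p - 2) * (n + 2) - 2) * c (n + 2) a +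
      2 * ∑ b ∈ univ.erase 0, c (n + 2) b + quadPart s c (n + 1) a := by
  rw [residual, sum_erase_eq_sub (by simpa)]
  push_cast
  ring

theorem forall_residual_add_one_eq_zero_iff (hp : 4 ≤ p) (s : ZMod p → ℂ)
    (c : ℕ → ZMod p → ℂ) (n : ℕ) :
    (∀ a : ZMod p, a ≠ 0 → residual s c (n + 1) a = 0) ↔
      ∀ a : ZMod p, a ≠ 0 → c (n + 2) a = shermanMorrison (univ.erase 0)
        ((p - 2) * (n + 2) - 2 : ℂ) 2 (fun b => -quadPart s c (n + 1) b) a := by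
  have hl : ((p : ℂ) - 2) * (n + 2) - 2 ≠ 0 := by
    have : p * (n + 2) ≠ 2 * n + 6 := by nlinarith
    intro h
    exact this (by exact_mod_cast (by linear_combination h : (p : ℂ) * (n + 2) = 2 * n + 6))
  have hlm : ((p : ℂ) - 2) * (n + 2) - 2 + #(univ.erase (0 : ZMod p)) * 2 ≠ 0 := by
    rw [card_erase_of_mem (mem_univ _), card_univ, ZMod.card, Nat.cast_sub (by omega)]
    have : p * (n + 4) ≠ 2 * n + 8 := by nlinarith
    intro h
    exact this (by exact_mod_cast (by linear_combination h : (p : ℂ) * (n + 4) = 2 * n + 8))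
  have key := forall_mul_add_mul_sum_eq_iff hl hlm (x := c (n + 2))
    (y := fun b => -quadPart s c (n + 1) b)
  simp only [mem_erase, mem_univ, and_true] at key
  rw [← key]
  refine forall₂_congr fun a ha => ?_
  rw [residual_add_one_eq s c n ha]
  constructor <;> intro h <;> linear_combination h

/-- `standardCoeff s t n a` is the coefficient of `z^n` in `f_a`. The truncation to indices
`< n + 2` only makes the recursion visibly well founded (see `standardCoeff_add_two`). -/
noncomputable def standardCoeff (s t : ZMod p → ℂ) : ℕ → ZMod p → ℂ
  | 0 => s
  | 1 => t
  | n + 2 => shermanMorrison (univ.erase 0) ((p - 2) * (n + 2) - 2 : ℂ) 2 fun b =>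
      -quadPart s (fun i => if i < n + 2 then standardCoeff s t i else 0) (n + 1) b

@[simp]
theorem standardCoeff_zero (s t : ZMod p → ℂ) : standardCoeff s t 0 = s := by
  rw [standardCoeff]

@[simp]
theorem standardCoeff_one (s t : ZMod p → ℂ) : standardCoeff s t 1 = t := by
  rw [standardCoeff]

theorem standardCoeff_add_two (s t : ZMod p → ℂ) (n : ℕ) {a : ZMod p} (ha : a ≠ 0) :
    standardCoeff s t (n + 2) a = shermanMorrison (univ.erase 0) ((p - 2) * (n + 2) - 2 : ℂ) 2
      (fun b => -quadPart s (standardCoeff s t) (n + 1) b) a := by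
  rw [standardCoeff]
  refine shermanMorrison_congr (fun b hb => ?_) (by simpa)
  rw [quadPart_congr s (c' := standardCoeff s t)
    (fun i hi b _ => by rw [if_pos (by omega : i < n + 2)]) (ne_of_mem_erase hb)]

theorem residual_standardCoeff (hp : 4 ≤ p) {s t : ZMod p → ℂ}
    (hodd : ∀ a : ZMod p, a ≠ 0 → s (-a) = -s a)
    (heven : ∀ a : ZMod p, a ≠ 0 → t (-a) = t a)
    (hquad : ∀ a b c : ZMod p, a ≠ 0 → b ≠ 0 → c ≠ 0 → a + b + c = 0 →
      s a * s b + s b * s c + s c * s a + t a + t b + t c = 0) :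
    ∀ n, ∀ a : ZMod p, a ≠ 0 → residual s (standardCoeff s t) n a = 0
  | 0, a, ha => by
    have h := sum_quadratic_relation hodd heven hquad ha
    rw [natCast_card_erase_zero_erase (by omega) ha] at h
    simpa [residual, quadPart, standardCoeff] using h
  | n + 1, a, ha =>
    (forall_residual_add_one_eq_zero_iff hp s _ n).2 (fun _ hb => standardCoeff_add_two s t n hb)
      a ha

theorem eq_standardCoeff (hp : 4 ≤ p) {s t : ZMod p → ℂ} {c : ℕ → ZMod p → ℂ}
    (h0 : ∀ a : ZMod p, a ≠ 0 → c 0 a = s a) (h1 : ∀ a : ZMod p, a ≠ 0 → c 1 a = t a)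
    (hres : ∀ n, ∀ a : ZMod p, a ≠ 0 → residual s c (n + 1) a = 0) (n : ℕ) :
    ∀ a : ZMod p, a ≠ 0 → c n a = standardCoeff s t n a := by
  induction n using Nat.strong_induction_on with
  | _ n ih =>
    match n, ih with
    | 0, _ => simpa using h0
    | 1, _ => simpa using h1
    | n + 2, ih =>
      intro a ha
      rw [(forall_residual_add_one_eq_zero_iff hp s c n).1 (hres n) a ha,
        standardCoeff_add_two s t n ha]
      refine shermanMorrison_congr (fun b hb => ?_) (by simpa)
      rw [quadPart_congr s (fun i hi => ih i (by omega)) (ne_of_mem_erase hb)]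

end StandardSolution

open StandardSolution in
theorem statement8_general (p : ℕ) (hp5 : 5 ≤ p) [NeZero p]
    (s t : ZMod p → ℂ)
    (hodd : ∀ a : ZMod p, a ≠ 0 → s (-a) = - s a)
    (heven : ∀ a : ZMod p, a ≠ 0 → t (-a) = t a)
    (hquad : ∀ a b c : ZMod p, a ≠ 0 → b ≠ 0 → c ≠ 0 → a + b + c = 0 →
      s a * s b + s b * s c + s c * s a + t a + t b + t c = 0) :
    ∃ f : ZMod p → PowerSeries ℂ, IsStandardSolution p s t f ∧
      ∀ g : ZMod p → PowerSeries ℂ, IsStandardSolution p s t g →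
        ∀ a : ZMod p, a ≠ 0 → g a = f a := by
  refine ⟨fun a => mk fun n => standardCoeff s t n a, ?_, fun g hg a ha => ?_⟩
  · rw [isStandardSolution_iff (by omega) hodd]
    intro a ha
    simp only [coeff_mk, ← coeff_zero_eq_constantCoeff_apply]
    exact ⟨by simp, by simp, fun n => residual_standardCoeff (by omega) hodd heven hquad n a ha⟩
  · rw [isStandardSolution_iff (by omega) hodd] at hg
    ext n
    rw [coeff_mk]
    exact eq_standardCoeff (by omega) (fun b hb => by simpa using (hg b hb).1)
      (fun b hb => (hg b hb).2.1) (fun n b hb => (hg b hb).2.2 (n + 1)) n a ha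

/-- Under the symmetries and quadratic relations on (s, t), the standard
solution exists and is unique. -/
theorem statement8 (p : ℕ) (hp : p.Prime) (hp5 : 5 ≤ p) [NeZero p]
    (s t : ZMod p → ℂ)
    (hodd : ∀ a : ZMod p, a ≠ 0 → s (-a) = - s a)
    (heven : ∀ a : ZMod p, a ≠ 0 → t (-a) = t a)
    (hquad : ∀ a b c : ZMod p, a ≠ 0 → b ≠ 0 → c ≠ 0 → a + b + c = 0 →
      s a * s b + s b * s c + s c * s a + t a + t b + t c = 0) :
    ∃ f : ZMod p → PowerSeries ℂ, IsStandardSolution p s t f ∧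
      ∀ g : ZMod p → PowerSeries ℂ, IsStandardSolution p s t g →
        ∀ a : ZMod p, a ≠ 0 → g a = f a :=
  statement8_general p hp5 s t hodd heven hquad
end

section
/- Let p ≥ 5 be a prime and let s : {1, 2, …, p−1} → ℝ satisfy s_{p−a} = −s_a for all a, and suppose that for all a, b, c ∈ {1, …, p−1} with a + b + c ≡ 0 (mod p) one has s_a + s_b + s_c ∈ {1, −1}, and that s_1 ≥ s_a for all a ∈ {1, …, p−1}. Then s_a = 1 − 2a/p for every a ∈ {1, …, p−1}. -/
/-- If s : {1,…,p−1} → ℝ satisfies s_{p−a} = −s_a, every triple sum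
s_a + s_b + s_c with a + b + c ≡ 0 (mod p) equals ±1, and s_1 is maximal, then
s_a = 1 − 2a/p for all a; i.e. s is the cusp solution. -/
theorem statement13 (p : ℕ) (hp : p.Prime) (hp5 : 5 ≤ p)
    (s : ℕ → ℝ)
    (hsym : ∀ a : ℕ, 1 ≤ a → a ≤ p - 1 → s (p - a) = - s a)
    (htriple : ∀ a b c : ℕ, 1 ≤ a → a ≤ p - 1 → 1 ≤ b → b ≤ p - 1 → 1 ≤ c → c ≤ p - 1 →
      (a + b + c) % p = 0 → s a + s b + s c = 1 ∨ s a + s b + s c = -1)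
    (hmax : ∀ a : ℕ, 1 ≤ a → a ≤ p - 1 → s a ≤ s 1) :
    ∀ a : ℕ, 1 ≤ a → a ≤ p - 1 → s a = 1 - 2 * (a : ℝ) / (p : ℝ) := by
  have hpR : (5:ℝ) ≤ (p:ℝ) := by exact_mod_cast hp5
  have hp0 : (0:ℝ) < (p:ℝ) := by linarith
  have h1le : 1 ≤ p - 1 := by omega
  have hsp1 : s (p - 1) = - s 1 := hsym 1 le_rfl h1le
  have hs1nonneg : 0 ≤ s 1 := by
    have := hmax (p-1) (by omega) le_rfl
    rw [hsp1] at this; linarith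
  -- epsilon values
  have heps : ∀ j : ℕ, 1 ≤ j → j ≤ p - 2 →
      s j + s 1 - s (j+1) = 1 ∨ s j + s 1 - s (j+1) = -1 := by
    intro j hj1 hj2
    have hsum : (j + 1 + (p - 1 - j)) % p = 0 := by
      have h : j + 1 + (p - 1 - j) = p := by omega
      rw [h, Nat.mod_self]
    have ht := htriple j 1 (p-1-j) hj1 (by omega) le_rfl (by omega) (by omega) (by omega) hsum
    have hs : s (p - (j+1)) = - s (j+1) := hsym (j+1) (by omega) (by omega)
    have hpj : p - 1 - j = p - (j+1) := by omega
    rw [hpj, hs] at ht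
    rcases ht with h | h
    · left; linarith
    · right; linarith
  -- telescoping sum
  have htel : ∑ i ∈ Finset.range (p-2), (s (i+2) - s (i+1)) = -2 * s 1 := by
    rw [Finset.sum_range_sub (fun i => s (i+1))]
    have h : p - 2 + 1 = p - 1 := by omega
    rw [h, hsp1]; ring
  have hcast : ((p-2:ℕ):ℝ) = (p:ℝ) - 2 := by
    push_cast [Nat.cast_sub (by omega : 2 ≤ p)]; ring
  -- bound: p * s 1 ≤ p - 2
  have hbound : (p:ℝ) * s 1 ≤ (p:ℝ) - 2 := by
    have hterm : ∀ i ∈ Finset.range (p-2), s 1 - 1 ≤ s (i+2) - s (i+1) := by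
      intro i hi
      simp only [Finset.mem_range] at hi
      rcases heps (i+1) (by omega) (by omega) with h | h <;> linarith
    have hle := Finset.card_nsmul_le_sum (Finset.range (p-2)) _ _ hterm
    rw [Finset.card_range, nsmul_eq_mul, hcast, htel] at hle
    nlinarith
  -- each epsilon is 1
  have heps1 : ∀ j : ℕ, 1 ≤ j → j ≤ p - 2 → s j + s 1 - s (j+1) = 1 := by
    intro j hj1 hj2
    rcases heps j hj1 hj2 with h | h
    · exact h
    · exfalso
      have hmj : s (p - j) = - s j := hsym j hj1 (by omega)
      have hjm : s (j+1) ≤ s 1 := hmax (j+1) (by omega) (by omega)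
      have hpjmax : s (p - j) ≤ s 1 := hmax (p - j) (by omega) (by omega)
      nlinarith
  -- exact value of s 1
  have hs1 : (p:ℝ) * s 1 = (p:ℝ) - 2 := by
    have hterm : ∀ i ∈ Finset.range (p-2), s (i+2) - s (i+1) = s 1 - 1 := by
      intro i hi
      simp only [Finset.mem_range] at hi
      have := heps1 (i+1) (by omega) (by omega); linarith
    rw [Finset.sum_congr rfl hterm, Finset.sum_const, Finset.card_range,
      nsmul_eq_mul, hcast] at htel
    linear_combination htel
  -- induction
  intro a
  induction a with
  | zero => intro h; omega
  | succ n ih =>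
    intro h1 h2
    rcases Nat.lt_or_ge n 1 with hn | hn
    · interval_cases n
      have : s 1 = 1 - 2 * (1:ℝ) / (p:ℝ) := by
        field_simp
        linear_combination hs1
      simpa using this
    · have hrec := heps1 n hn (by omega)
      have hihn := ih hn (by omega)
      have hs1' : s 1 = 1 - 2 / (p:ℝ) := by
        field_simp
        linear_combination hs1
      rw [hihn, hs1'] at hrec
      push_cast
      have hne : (p:ℝ) ≠ 0 := ne_of_gt hp0
      field_simp at hrec ⊢
      linarith
end

section
/- Let p ≥ 5 be a prime and let ρ, s : (ℤ/pℤ) ∖ {0} → ℂ satisfy ρ_a ρ_b = ρ_{a+b}(s_a + s_b) for all nonzero a, b ∈ ℤ/pℤ with a + b ≠ 0. If ρ_{a₀} = 0 for some nonzero a₀, then ρ_a = 0 for all nonzero a. -/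
/-- If ρ, s on the nonzero residues mod p satisfy
ρ_a ρ_b = ρ_{a+b}(s_a + s_b) whenever a, b, a+b are nonzero, and ρ vanishes at some
nonzero residue, then ρ vanishes at every nonzero residue. -/
theorem statement14 (p : ℕ) (hp : p.Prime) (hp5 : 5 ≤ p)
    (ρ s : ZMod p → ℂ)
    (hmul : ∀ a b : ZMod p, a ≠ 0 → b ≠ 0 → a + b ≠ 0 →
      ρ a * ρ b = ρ (a + b) * (s a + s b))
    (a₀ : ZMod p) (ha₀ : a₀ ≠ 0) (hρ₀ : ρ a₀ = 0) :
    ∀ a : ZMod p, a ≠ 0 → ρ a = 0 := by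
  haveI : Fact p.Prime := ⟨hp⟩
  intro a ha
  by_contra hρa
  have key : ∀ n : ℕ, 0 < n → n < p → ρ ((n : ZMod p) * a) ≠ 0 := by
    intro n
    induction n with
    | zero => intro h; exact absurd h (lt_irrefl 0)
    | succ n ih =>
      intro _ hlt
      rcases Nat.eq_zero_or_pos n with h0 | hn
      · subst h0; simpa using hρa
      · have hnlt : n < p := by omega
        have hcast : ∀ m : ℕ, 0 < m → m < p → ((m : ℕ) : ZMod p) ≠ 0 := by
          intro m hm hmp hz
          rw [ZMod.natCast_eq_zero_iff] at hz
          have := Nat.le_of_dvd hm hz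
          omega
        have hna : ((n : ℕ) : ZMod p) ≠ 0 := hcast n hn hnlt
        have hn1 : (((n + 1 : ℕ)) : ZMod p) ≠ 0 := hcast (n + 1) (by omega) hlt
        have h1 : (n : ZMod p) * a ≠ 0 := mul_ne_zero hna ha
        have heq : (n : ZMod p) * a + a = ((n + 1 : ℕ) : ZMod p) * a := by
          push_cast; ring
        have hsum : (n : ZMod p) * a + a ≠ 0 := by
          rw [heq]; exact mul_ne_zero hn1 ha
        have hrel := hmul ((n : ZMod p) * a) a h1 ha hsum
        have hne : ρ ((n : ZMod p) * a) * ρ a ≠ 0 := mul_ne_zero (ih hn hnlt) hρa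
        rw [hrel, heq] at hne
        exact fun hz => hne (by rw [hz, zero_mul])
  set n : ℕ := (a₀ * a⁻¹).val with hn
  have hval : ((n : ℕ) : ZMod p) = a₀ * a⁻¹ := by
    rw [hn, ZMod.natCast_val, ZMod.cast_id]
  have hmulne : a₀ * a⁻¹ ≠ 0 := mul_ne_zero ha₀ (inv_ne_zero ha)
  have hnpos : 0 < n := by
    rcases Nat.eq_zero_or_pos n with h0 | h
    · exfalso; apply hmulne; rw [← hval, h0]; simp
    · exact h
  have hnlt : n < p := ZMod.val_lt _
  have := key n hnpos hnlt
  apply this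
  rw [hval, mul_assoc, inv_mul_cancel₀ ha, mul_one, hρ₀]
end

section
/- Let p ≥ 5 be a prime and let ρ, s : (ℤ/pℤ) ∖ {0} → ℂ satisfy ρ_{−a} = −ρ_a, ρ_a ≠ 0 for all nonzero a, and ρ_a ρ_b = ρ_{a+b}(s_a + s_b) for all nonzero a, b with a + b ≠ 0. Then for all nonzero a, b, c ∈ ℤ/pℤ with a + b + c = 0 one has ρ_a² = (s_a + s_b)(s_a + s_c); consequently s_a s_b + s_b s_c + s_c s_a depends only on a, i.e., for nonzero b, b′ with a + b ≠ 0 and a + b′ ≠ 0, s_a s_b + s_b s_{−a−b} + s_{−a−b} s_a = s_a s_{b′} + s_{b′} s_{−a−b′} + s_{−a−b′} s_a. -/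
/-- If ρ is odd, nowhere vanishing on the nonzero residues, and satisfies
ρ_a ρ_b = ρ_{a+b}(s_a + s_b) whenever a, b, a+b are nonzero, then for every nonzero
a, b, c with a + b + c = 0 one has ρ_a² = (s_a + s_b)(s_a + s_c); consequently
s_a s_b + s_b s_c + s_c s_a depends only on a. -/
theorem statement15 (p : ℕ) (hp : p.Prime) (hp5 : 5 ≤ p)
    (ρ s : ZMod p → ℂ)
    (hρodd : ∀ a : ZMod p, a ≠ 0 → ρ (-a) = - ρ a)
    (hρne : ∀ a : ZMod p, a ≠ 0 → ρ a ≠ 0)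
    (hmul : ∀ a b : ZMod p, a ≠ 0 → b ≠ 0 → a + b ≠ 0 →
      ρ a * ρ b = ρ (a + b) * (s a + s b)) :
    (∀ a b c : ZMod p, a ≠ 0 → b ≠ 0 → c ≠ 0 → a + b + c = 0 →
      ρ a ^ 2 = (s a + s b) * (s a + s c)) ∧
    (∀ a b b' : ZMod p, a ≠ 0 → b ≠ 0 → b' ≠ 0 → a + b ≠ 0 → a + b' ≠ 0 →
      s a * s b + s b * s (-a - b) + s (-a - b) * s a =
        s a * s b' + s b' * s (-a - b') + s (-a - b') * s a) := by
  have key : ∀ a b c : ZMod p, a ≠ 0 → b ≠ 0 → c ≠ 0 → a + b + c = 0 →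
      ρ a ^ 2 = (s a + s b) * (s a + s c) := by
    intro a b c ha hb hc habc
    have hab : a + b ≠ 0 := fun h => hc (by linear_combination habc - h)
    have hac : a + c ≠ 0 := fun h => hb (by linear_combination habc - h)
    have hceq : c = -(a + b) := by linear_combination habc
    have hρc : ρ c = - ρ (a + b) := by rw [hceq]; exact hρodd _ hab
    have haceq : a + c = -b := by linear_combination habc
    have hρac : ρ (a + c) = - ρ b := by rw [haceq]; exact hρodd _ hb
    have h1 := hmul a b ha hb hab
    have h2 := hmul a c ha hc hac
    have h3 : ρ a * ρ (a + b) = ρ b * (s a + s c) := by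
      linear_combination -h2 + ρ a * hρc - (s a + s c) * hρac
    have heq : ρ a ^ 2 * (ρ b * ρ (a + b)) =
        ((s a + s b) * (s a + s c)) * (ρ b * ρ (a + b)) := by
      linear_combination (ρ a * ρ (a + b)) * h1 + (ρ (a + b) * (s a + s b)) * h3
    exact mul_right_cancel₀ (mul_ne_zero (hρne b hb) (hρne _ hab)) heq
  refine ⟨key, fun a b b' ha hb hb' hab hab' => ?_⟩
  have hc : (-a - b : ZMod p) ≠ 0 := fun h => hab (by linear_combination -h)
  have hc' : (-a - b' : ZMod p) ≠ 0 := fun h => hab' (by linear_combination -h)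
  have h1 := key a b (-a - b) ha hb hc (by ring)
  have h2 := key a b' (-a - b') ha hb' hc' (by ring)
  linear_combination h2 - h1
end
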